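/- arXiv:2604.09449 — 5 statements merged into one kernel-verified Lean document; each statement's English description precedes it below -/
import Mathlib

section
/- Let k ≥ 1 and t ≥ 1 be integers and let c be a k-edge-colouring of the complete graph K_{2kt+1}. Suppose that for every j ∈ {1,…,k} and every set S of j colours from {1,…,k}, the number of edges whose colour lies in S is strictly greater than C(2jt, 2) = (2jt)(2jt−1)/2. Then K_{2kt+1} contains a spanning tree in which every colour appears on exactly 2t edges. -/
/-!
Take `2t` copies of each colour class of `K_{2kt+1}`. A colour-balanced spanning tree is exactly
an independent transversal of this family in the cycle matroid, so by Rado's theorem it suffices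
that the edges of any `j` colours contain a forest with `2jt` edges. This follows from the
hypothesis, because a graph whose largest forest has `r` edges has at most `C(r + 1, 2)` edges:
removing the edges at a vertex `v` lowers the rank by at least one, and these edges form a star,
hence a forest, so there are at most `r` of them.
-/

open Function Finset

namespace Matroid

variable {α ι : Type*} [DecidableEq α] {M : Matroid α}

def RadoCondition (M : Matroid α) (A : ι → Finset α) : Prop :=
  ∀ S : Finset ι, (#S : ℕ∞) ≤ M.eRk ↑(S.biUnion A)

/-- If both erasures broke Rado's condition, submodularity of the rank applied to the unions
witnessing this would give a contradiction. -/
lemma RadoCondition.update_erase_or [DecidableEq ι] {A : ι → Finset α} (hA : M.RadoCondition A)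
    (i : ι) {x y : α} (hxy : x ≠ y) :
    M.RadoCondition (update A i ((A i).erase x)) ∨
      M.RadoCondition (update A i ((A i).erase y)) := by
  rw [or_iff_not_and_not]
  rintro ⟨hx, hy⟩
  simp only [RadoCondition, not_forall, not_le] at hx hy
  obtain ⟨Sx, hSx⟩ := hx
  obtain ⟨Sy, hSy⟩ := hy
  have mem_of_lt {S : Finset ι} {z : α}
      (hS : M.eRk ↑(S.biUnion (update A i ((A i).erase z))) < #S) : i ∈ S := by
    by_contra hi
    refine (hA S).not_gt ?_
    rwa [biUnion_congr rfl fun j hj ↦ update_of_ne (ne_of_mem_of_not_mem hj hi) _ _] at hS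
  set X : Set α := ↑(Sx.biUnion (update A i ((A i).erase x)))
  set Y : Set α := ↑(Sy.biUnion (update A i ((A i).erase y)))
  have hU : ↑((Sx ∪ Sy).biUnion A) ⊆ X ∪ Y := by
    intro e he
    simp only [X, Y, coe_biUnion, Set.mem_iUnion, mem_coe, Set.mem_union, update_apply,
      mem_union] at he ⊢
    grind
  have hI : ↑(((Sx ∩ Sy).erase i).biUnion A) ⊆ X ∩ Y := by
    intro e he
    simp only [X, Y, coe_biUnion, Set.mem_iUnion, mem_coe, Set.mem_inter_iff, update_apply,
      mem_inter, mem_erase] at he ⊢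
    grind
  have hsub := M.eRk_inter_add_eRk_union_le X Y
  have hUr := (hA (Sx ∪ Sy)).trans (M.eRk_mono hU)
  have hIr := (hA ((Sx ∩ Sy).erase i)).trans (M.eRk_mono hI)
  have h₁ := card_erase_add_one (mem_inter.2 ⟨mem_of_lt hSx, mem_of_lt hSy⟩)
  have h₂ := card_union_add_card_inter Sx Sy
  lift M.eRk X to ℕ using hSx.ne_top with a
  lift M.eRk Y to ℕ using hSy.ne_top with b
  lift M.eRk (X ∩ Y) to ℕ using ne_top_of_le_ne_top (by simp) (le_self_add.trans hsub) with c
  lift M.eRk (X ∪ Y) to ℕ using ne_top_of_le_ne_top (by simp) (le_add_self.trans hsub) with d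
  norm_cast at hSx hSy hsub hUr hIr
  omega

lemma RadoCondition.exists_of_card_le_one [Fintype ι] {A : ι → Finset α}
    (hA : M.RadoCondition A) (hA₁ : ∀ i, #(A i) ≤ 1) :
    ∃ f : ι → α, Injective f ∧ (∀ i, f i ∈ A i) ∧ M.Indep (Set.range f) := by
  have hsingle (i : ι) : ∃ a, A i = {a} := by
    have h := (hA {i}).trans (M.eRk_le_encard _)
    rw [singleton_biUnion, Set.encard_coe_eq_coe_finsetCard] at h
    exact card_eq_one.1 (le_antisymm (hA₁ i) (by simpa using h))
  choose f hf using hsingle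
  have hbiUnion : univ.biUnion A = univ.image f := by
    ext
    simp [hf, eq_comm]
  have hrk := hA univ
  rw [hbiUnion] at hrk
  have hcard := hrk.trans (M.eRk_le_encard _)
  rw [Set.encard_coe_eq_coe_finsetCard, Nat.cast_le] at hcard
  have hinj : Injective f := by
    rw [← Set.injOn_univ, ← coe_univ, ← card_image_iff]
    exact le_antisymm card_image_le hcard
  refine ⟨f, hinj, fun i ↦ by simp [hf], ?_⟩
  rw [← Set.image_univ, ← coe_univ, ← coe_image,
    indep_iff_eRk_eq_encard_of_finite (finite_toSet _)]
  refine le_antisymm (M.eRk_le_encard _) ?_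
  rw [Set.encard_coe_eq_coe_finsetCard]
  exact (Nat.cast_le.2 card_image_le).trans hrk

/-- Rado's theorem. -/
theorem RadoCondition.exists_injective_indep_range [Fintype ι] [DecidableEq ι]
    {A : ι → Finset α} (hA : M.RadoCondition A) :
    ∃ f : ι → α, Injective f ∧ (∀ i, f i ∈ A i) ∧ M.Indep (Set.range f) := by
  obtain ⟨B, hBA, hB⟩ := exists_minimal_le_of_wellFoundedLT (M.RadoCondition ·) A hA
  -- a minimal family satisfying Rado's condition consists of singletons
  have hB₁ (i : ι) : #(B i) ≤ 1 := by
    by_contra! h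
    obtain ⟨x, hx, y, hy, hxy⟩ := one_lt_card.1 h
    have not_rado {z : α} (hz : z ∈ B i) : ¬M.RadoCondition (update B i ((B i).erase z)) := by
      intro hz'
      have hle : update B i ((B i).erase z) ≤ B := by
        intro j
        rcases eq_or_ne j i with rfl | hj
        · simpa using erase_subset z (B j)
        · simp [hj]
      simpa using hB.le_of_le hz' hle i hz
    exact (hB.prop.update_erase_or i hxy).elim (not_rado hx) (not_rado hy)
  obtain ⟨f, hf, hfB, hfM⟩ := hB.prop.exists_of_card_le_one hB₁
  exact ⟨f, hf, fun i ↦ hBA i (hfB i), hfM⟩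

theorem exists_indep_forall_card_filter_eq {κ : Type*} [Fintype κ] [DecidableEq κ]
    (M : Matroid α) (E : Finset α) (c : α → κ) (m : ℕ)
    (hE : ∀ S : Finset κ, S.Nonempty →
      ((m * #S : ℕ) : ℕ∞) ≤ M.eRk ↑(E.filter (c · ∈ S))) :
    ∃ I : Finset α, I ⊆ E ∧ M.Indep I ∧ ∀ j, #(I.filter (c · = j)) = m := by
  let A (p : κ × Fin m) : Finset α := E.filter (c · = p.1)
  have hA : M.RadoCondition A := by
    intro S
    obtain rfl | hS := S.eq_empty_or_nonempty
    · simp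
    have hbiUnion : S.biUnion A = E.filter (c · ∈ S.image Prod.fst) := by
      ext e
      simp only [A, mem_biUnion, mem_filter, mem_image]
      grind
    have hcard : #S ≤ m * #(S.image Prod.fst) :=
      calc #S ≤ #(S.image Prod.fst ×ˢ (univ : Finset (Fin m))) :=
            card_le_card fun p hp ↦ mem_product.2 ⟨mem_image_of_mem _ hp, mem_univ _⟩
        _ = m * #(S.image Prod.fst) := by simp [mul_comm]
    rw [hbiUnion]
    exact (Nat.cast_le.2 hcard).trans (hE _ (hS.image _))
  obtain ⟨f, hf, hfA, hfM⟩ := hA.exists_injective_indep_range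
  refine ⟨univ.image f, fun e he ↦ ?_, by simpa using hfM, fun j ↦ ?_⟩
  · obtain ⟨p, -, rfl⟩ := mem_image.1 he
    exact (mem_filter.1 (hfA p)).1
  · have hcolour (p : κ × Fin m) : c (f p) = p.1 := (mem_filter.1 (hfA p)).2
    have : (univ.image f).filter (c · = j) = univ.image fun l : Fin m ↦ f (j, l) := by
      ext e
      simp only [mem_filter, mem_image, mem_univ, true_and]
      grind
    rw [this, card_image_of_injective _ fun l l' h ↦ (Prod.ext_iff.1 (hf h)).2, card_univ,
      Fintype.card_fin]

end Matroid

namespace SimpleGraph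

variable {V : Type*}

lemma IsAcyclic.ncard_edgeSet_eq_ncard_setOf_ne {F : SimpleGraph V} (hF : F.IsAcyclic)
    (root : V → V) (reach_root : ∀ x, F.Reachable x (root x))
    (root_eq : ∀ ⦃x y⦄, F.Reachable x y → root x = root y) :
    F.edgeSet.ncard = {x | root x ≠ x}.ncard := by
  classical
  let path (x : V) : F.Path x (root x) := (reach_root x).some.toPath
  -- each non-root vertex `x` is matched with the first edge of its path to the root
  have parent_edge {x y : V} (hxy : F.Adj x y) (hy : y ∈ (path x).1.support) :
      root x ≠ x ∧ s(x, (path x).1.snd) = s(x, y) := by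
    refine ⟨fun hx ↦ hxy.ne' ?_, by rw [← hF.eq_snd_of_adj_start (path x).2 hxy hy]⟩
    have hloop : ∀ {r} (p : F.Walk x r), p.IsPath → r = x → y ∈ p.support → y = x := by
      rintro r p hp rfl hy
      simpa [Walk.nil_iff_support_eq.1 (Walk.isPath_iff_nil.1 hp)] using hy
    exact hloop _ (path x).2 hx hy
  have not_nil {x : V} (hx : root x ≠ x) : ¬(path x).1.Nil := Walk.not_nil_of_ne hx.symm
  symm
  refine Set.ncard_congr (fun x _ ↦ s(x, (path x).1.snd))
    (fun x hx ↦ Walk.adj_snd (not_nil hx)) (fun x y hx _ hxy ↦ ?_) (fun e he ↦ ?_)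
  · rcases Sym2.eq_iff.1 hxy with ⟨h, -⟩ | ⟨hx_eq, hy_eq⟩
    · exact h
    have hadj : F.Adj x y := hy_eq ▸ Walk.adj_snd (not_nil hx)
    refine absurd ?_ (hF.ne_mem_support_of_support_of_adj_of_isPath (path x).2.reverse
      (q := (path y).1.reverse.copy (root_eq hadj.reachable).symm rfl) (by simp) hadj ?_)
    · simp [hx_eq]
    · simp [← hy_eq]
  · induction e using Sym2.ind with | _ u v
    have hadj : F.Adj u v := he
    by_cases hv : v ∈ (path u).1.support
    · obtain ⟨hu, he⟩ := parent_edge hadj hv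
      exact ⟨u, hu, he⟩
    have hu : u ∈ (path v).1.support := by
      simpa using hF.mem_support_of_ne_mem_support_of_adj_of_isPath (path v).2.reverse
        (q := (path u).1.reverse.copy (root_eq hadj.reachable) rfl) (by simp) hadj.symm
        (by simpa using hv)
    obtain ⟨hv', he⟩ := parent_edge hadj.symm hu
    exact ⟨v, hv', he.trans Sym2.eq_swap⟩

theorem IsAcyclic.ncard_edgeSet_add_card_connectedComponent [Finite V] {F : SimpleGraph V}
    (hF : F.IsAcyclic) : F.edgeSet.ncard + Nat.card F.ConnectedComponent = Nat.card V := by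
  let root (x : V) : V := (F.connectedComponentMk x).out
  have hroots : {x | root x ≠ x}ᶜ = Set.range fun c : F.ConnectedComponent ↦ c.out := by
    ext x
    refine ⟨fun h ↦ ⟨_, not_not.1 h⟩, ?_⟩
    rintro ⟨c, rfl⟩
    exact not_not.2 (congrArg Quot.out (Quot.out_eq c))
  rw [hF.ncard_edgeSet_eq_ncard_setOf_ne root
      (fun x ↦ ConnectedComponent.exact (Quot.out_eq _).symm)
      (fun x y h ↦ by simp only [root, ConnectedComponent.sound h]),
    ← Set.ncard_range_of_injective (f := fun c : F.ConnectedComponent ↦ c.out)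
      (LeftInverse.injective Quot.out_eq), ← hroots, Set.ncard_add_ncard_compl]

lemma card_connectedComponent_le_of_adj_reachable [Finite V] {G G' : SimpleGraph V}
    (h : ∀ ⦃u v⦄, G.Adj u v → G'.Reachable u v) :
    Nat.card G'.ConnectedComponent ≤ Nat.card G.ConnectedComponent := by
  have reach ⦃u v : V⦄ (huv : G.Reachable u v) : G'.Reachable u v := by
    rw [reachable_iff_reflTransGen] at huv ⊢
    exact huv.lift' id fun a b hab ↦ (reachable_iff_reflTransGen a b).1 (h hab)
  exact Nat.card_le_card_of_surjective
    (Quot.lift G'.connectedComponentMk fun _ _ huv ↦ ConnectedComponent.sound (reach huv))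
    (ConnectedComponent.ind fun v ↦ ⟨G.connectedComponentMk v, rfl⟩)

lemma IsAcyclic.ncard_edgeSet_le_of_adj_reachable [Finite V] {H K : SimpleGraph V}
    (hH : H.IsAcyclic) (hK : K.IsAcyclic) (h : ∀ ⦃u v⦄, K.Adj u v → H.Reachable u v) :
    K.edgeSet.ncard ≤ H.edgeSet.ncard := by
  have := card_connectedComponent_le_of_adj_reachable h
  have := hH.ncard_edgeSet_add_card_connectedComponent
  have := hK.ncard_edgeSet_add_card_connectedComponent
  omega

lemma IsAcyclic.isTree_of_ncard_edgeSet_add_one [Finite V] [Nonempty V] {F : SimpleGraph V}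
    (hF : F.IsAcyclic) (h : F.edgeSet.ncard + 1 = Nat.card V) : F.IsTree := by
  have hcc := hF.ncard_edgeSet_add_card_connectedComponent
  have : Subsingleton F.ConnectedComponent := Finite.card_le_one_iff_subsingleton.1 (by omega)
  exact ⟨(connected_iff _).2 ⟨fun u v ↦ ConnectedComponent.exact (Subsingleton.elim _ _),
    inferInstance⟩, hF⟩

lemma fromEdgeSet_insert (s : Set (Sym2 V)) (u v : V) :
    fromEdgeSet (insert s(u, v) s) = fromEdgeSet s ⊔ edge u v := by
  rw [Set.insert_eq, fromEdgeSet_union, sup_comm]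
  rfl

lemma edgeSet_fromEdgeSet_of_subset {G : SimpleGraph V} {s : Set (Sym2 V)}
    (hs : s ⊆ G.edgeSet) : (fromEdgeSet s).edgeSet = s := by
  rw [edgeSet_fromEdgeSet, sdiff_eq_left]
  exact Set.disjoint_left.2 fun e he ↦ G.not_isDiag_of_mem_edgeSet (hs he)

lemma isAcyclic_fromEdgeSet_of_forall_mem {s : Set (Sym2 V)} {v : V} (hs : ∀ e ∈ s, v ∈ e) :
    (fromEdgeSet s).IsAcyclic := by
  rw [isAcyclic_iff_forall_adj_isBridge]
  intro a b hab
  rw [fromEdgeSet_adj] at hab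
  -- the endpoint of `s(a, b)` other than `v` is a leaf
  have leaf {x y : V} (hxy : s(x, y) = s(a, b)) (hx : x = v) :
      ((fromEdgeSet s).deleteEdges {s(a, b)}).neighborSet y = ∅ := by
    ext w
    simp only [mem_neighborSet, deleteEdges_adj, fromEdgeSet_adj, Set.mem_singleton_iff,
      Set.mem_empty_iff_false, iff_false, not_and, not_not]
    intro hyw
    rcases Sym2.mem_iff.1 (hs _ hyw.1) with h | h
    · grind [Sym2.eq_iff]
    · rw [← hxy, hx, h, Sym2.eq_swap]
  rcases Sym2.mem_iff.1 (hs _ hab.1) with rfl | rfl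
  · exact isBridge_iff.2 (not_reachable_of_neighborSet_right_eq_empty hab.2 (leaf rfl rfl))
  · exact isBridge_iff.2
      (not_reachable_of_neighborSet_left_eq_empty hab.2 (leaf Sym2.eq_swap rfl))

variable [Finite V] (G : SimpleGraph V)

lemma exists_insert_isAcyclic_of_ncard_lt {I J : Set (Sym2 V)}
    (hI : I ⊆ G.edgeSet ∧ (fromEdgeSet I).IsAcyclic)
    (hJ : J ⊆ G.edgeSet ∧ (fromEdgeSet J).IsAcyclic) (hIJ : I.ncard < J.ncard) :
    ∃ e ∈ J, e ∉ I ∧ insert e I ⊆ G.edgeSet ∧ (fromEdgeSet (insert e I)).IsAcyclic := by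
  by_contra! h
  refine hIJ.not_ge ?_
  rw [← edgeSet_fromEdgeSet_of_subset hI.1, ← edgeSet_fromEdgeSet_of_subset hJ.1]
  refine hI.2.ncard_edgeSet_le_of_adj_reachable hJ.2 fun u v huv ↦ ?_
  rw [fromEdgeSet_adj] at huv
  by_contra hr
  have huvI : s(u, v) ∉ I := fun h ↦ hr ((fromEdgeSet_adj _).2 ⟨h, huv.2⟩).reachable
  refine h _ huv.1 huvI (Set.insert_subset (hJ.1 huv.1) hI.1) ?_
  rw [fromEdgeSet_insert]
  exact hI.2.sup_edge_of_not_reachable hr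

def cycleMatroid : Matroid (Sym2 V) :=
  (IndepMatroid.ofFinite G.edgeSet.toFinite
    (fun I ↦ I ⊆ G.edgeSet ∧ (fromEdgeSet I).IsAcyclic)
    ⟨Set.empty_subset _, by simp⟩
    (fun _ _ hJ hIJ ↦ ⟨hIJ.trans hJ.1, hJ.2.anti (fromEdgeSet_mono hIJ)⟩)
    (fun _ _ hI hJ hIJ ↦ (G.exists_insert_isAcyclic_of_ncard_lt hI hJ hIJ).imp
      fun _ ⟨heJ, heI, h⟩ ↦ ⟨heJ, heI, h⟩)
    (fun _ hI ↦ hI.1)).matroid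

lemma cycleMatroid_indep {I : Set (Sym2 V)} :
    G.cycleMatroid.Indep I ↔ I ⊆ G.edgeSet ∧ (fromEdgeSet I).IsAcyclic := Iff.rfl

lemma cycleMatroid_eRk_add_one_le {X Y : Set (Sym2 V)} {u v : V} (hY : Y ⊆ G.edgeSet)
    (huv : s(u, v) ∈ Y) (hXY : X ⊆ Y) (hX : ∀ e ∈ X, v ∉ e) :
    G.cycleMatroid.eRk X + 1 ≤ G.cycleMatroid.eRk Y := by
  obtain ⟨I, hI⟩ := G.cycleMatroid.exists_isBasis' X
  have hvI : ∀ e ∈ I, v ∉ e := fun e he ↦ hX e (hI.subset he)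
  obtain ⟨hIG, hIacyc⟩ := G.cycleMatroid_indep.1 hI.indep
  rw [← hI.encard_eq_eRk,
    ← Set.encard_insert_of_notMem fun h ↦ hvI _ h (Sym2.mem_mk_right u v)]
  refine Matroid.Indep.encard_le_eRk_of_subset
    (G.cycleMatroid_indep.2 ⟨Set.insert_subset (hY huv) hIG, ?_⟩)
    (Set.insert_subset huv (hI.subset.trans hXY))
  rw [fromEdgeSet_insert]
  refine hIacyc.sup_edge_of_not_reachable
    (not_reachable_of_neighborSet_right_eq_empty (hY huv).ne ?_)
  ext w
  simp only [mem_neighborSet, fromEdgeSet_adj, Set.mem_empty_iff_false, iff_false, not_and]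
  exact fun h _ ↦ hvI _ h (Sym2.mem_mk_left v w)

lemma card_le_choose_of_cycleMatroid_eRk_le {X : Finset (Sym2 V)} (hX : ↑X ⊆ G.edgeSet)
    {n : ℕ} (hn : G.cycleMatroid.eRk X ≤ n) : #X ≤ (n + 1).choose 2 := by
  classical
  induction X using Finset.strongInduction generalizing n with | H X ih
  obtain rfl | ⟨e, he⟩ := X.eq_empty_or_nonempty
  · simp
  induction e using Sym2.ind with | _ u v
  let star := X.filter (v ∈ ·)
  let rest := X.filter (v ∉ ·)
  have hstar : (#star : ℕ∞) ≤ G.cycleMatroid.eRk X := by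
    rw [← Set.encard_coe_eq_coe_finsetCard]
    exact Matroid.Indep.encard_le_eRk_of_subset
      (G.cycleMatroid_indep.2 ⟨fun f hf ↦ hX (filter_subset _ _ hf),
        isAcyclic_fromEdgeSet_of_forall_mem fun f hf ↦ (mem_filter.1 hf).2⟩)
      (coe_subset.2 (filter_subset _ _))
  have hrest := G.cycleMatroid_eRk_add_one_le hX he (coe_subset.2 (filter_subset _ _))
    fun f hf ↦ (mem_filter.1 hf).2
  obtain ⟨r, hr, hrn⟩ := ENat.le_natCast_iff.1 hn
  obtain ⟨r', hr', -⟩ := ENat.le_natCast_iff.1 (le_self_add.trans (hr ▸ hrest))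
  rw [hr, hr'] at hrest
  rw [hr] at hstar
  have hrest_card := ih rest (filter_ssubset.2 ⟨_, he, not_not.2 (Sym2.mem_mk_right u v)⟩)
    (fun f hf ↦ hX (filter_subset _ _ hf)) hr'.le
  norm_cast at hrest hstar
  have := Nat.choose_le_choose 2 (show r' + 1 ≤ r by omega)
  have := Nat.choose_le_choose 2 (show r + 1 ≤ n + 1 by omega)
  have : (r + 1).choose 2 = r + r.choose 2 := by simp [Nat.choose_succ_succ']
  have : #star + #rest = #X := card_filter_add_card_filter_not _
  omega

lemma le_cycleMatroid_eRk_of_choose_lt {X : Finset (Sym2 V)} (hX : ↑X ⊆ G.edgeSet) {m : ℕ}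
    (hm : m.choose 2 < #X) : (m : ℕ∞) ≤ G.cycleMatroid.eRk X := by
  by_contra! h
  obtain ⟨r, hr, hrm⟩ := ENat.le_natCast_iff.1 h.le
  have hle := G.card_le_choose_of_cycleMatroid_eRk_le hX hr.le
  have : r ≠ m := by rintro rfl; exact h.ne hr
  have := Nat.choose_le_choose 2 (show r + 1 ≤ m by omega)
  omega

end SimpleGraph

theorem stmt_5_general (k t : ℕ)
    (c : Sym2 (Fin (2 * k * t + 1)) → Fin k)
    (hcond : ∀ S : Finset (Fin k), S.Nonempty →
      (2 * S.card * t).choose 2 <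
        {e ∈ (⊤ : SimpleGraph (Fin (2 * k * t + 1))).edgeSet | c e ∈ S}.ncard) :
    ∃ T : SimpleGraph (Fin (2 * k * t + 1)), T.IsTree ∧
      ∀ i : Fin k, {e ∈ T.edgeSet | c e = i}.ncard = 2 * t := by
  classical
  let G := (⊤ : SimpleGraph (Fin (2 * k * t + 1)))
  have hcolours (S : Finset (Fin k)) : ↑(G.edgeFinset.filter (c · ∈ S)) =
      {e ∈ G.edgeSet | c e ∈ S} := by
    simp
  obtain ⟨I, -, hI, hIc⟩ := G.cycleMatroid.exists_indep_forall_card_filter_eq G.edgeFinset c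
    (2 * t) fun S hS ↦ by
      refine G.le_cycleMatroid_eRk_of_choose_lt (by simp) ?_
      have := hcond S hS
      rwa [← hcolours, Set.ncard_coe_finset, mul_right_comm] at this
  rw [SimpleGraph.cycleMatroid_indep] at hI
  have hedges : (SimpleGraph.fromEdgeSet (I : Set (Sym2 (Fin (2 * k * t + 1))))).edgeSet = ↑I :=
    SimpleGraph.edgeSet_fromEdgeSet_of_subset hI.1
  refine ⟨SimpleGraph.fromEdgeSet I, hI.2.isTree_of_ncard_edgeSet_add_one ?_, fun i ↦ ?_⟩
  · rw [hedges, Set.ncard_coe_finset, card_eq_sum_card_fiberwise fun e _ ↦ mem_univ (c e)]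
    simp only [hIc, sum_const, card_univ, Fintype.card_fin, smul_eq_mul, Nat.card_eq_fintype_card]
    ring
  · rw [hedges, ← hIc i, ← Set.ncard_coe_finset, coe_filter]
    rfl

/-- if every nonempty set `S` of colours carries strictly more than
`C(2·|S|·t, 2)` edges of `K_{2kt+1}`, then there is a colour-balanced spanning tree,
i.e. a spanning tree in which every colour appears on exactly `2t` edges. -/
theorem stmt_5 (k t : ℕ) (hk : 1 ≤ k) (ht : 1 ≤ t)
    (c : Sym2 (Fin (2 * k * t + 1)) → Fin k)
    (hcond : ∀ S : Finset (Fin k), S.Nonempty →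
      (2 * S.card * t).choose 2 <
        {e ∈ (⊤ : SimpleGraph (Fin (2 * k * t + 1))).edgeSet | c e ∈ S}.ncard) :
    ∃ T : SimpleGraph (Fin (2 * k * t + 1)), T.IsTree ∧
      ∀ i : Fin k, {e ∈ T.edgeSet | c e = i}.ncard = 2 * t :=
  stmt_5_general k t c hcond
end

section
/- Let k ≥ 1 and t ≥ 1 be integers and let c be a colour-balanced k-edge-colouring of the complete graph K_{2kt+1}. Then K_{2kt+1} contains a spanning tree in which every colour appears on exactly 2t edges. -/
/-!
The spanning forests of `K_n` are the independent sets of its cycle matroid, which is represented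
over `𝔽₂` by the incidence vectors of the edges; an independent set of rank `n - 1` is a spanning
tree. By Rado's theorem, the matroid has an independent set with exactly `v i` elements of each
colour `i` as soon as, for every set `S` of colours, the elements with colours in `S` have rank at
least `∑ i ∈ S, v i`. For the balanced colouring and `v = 2t`, the `s` colours of `S` carry
`s t (2kt + 1)` edges, while a graph of rank `r` has at most `r (r + 1) / 2` edges; hence their rank
is at least `2ts`.
-/

open Finset SimpleGraph

/-- The rank function of a matroid on `α`, evaluated on finite sets. -/
structure FinsetRank (α : Type*) [DecidableEq α] where
  toFun : Finset α → ℕ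
  map_empty : toFun ∅ = 0
  mono : Monotone toFun
  insert_le : ∀ (A : Finset α) (a : α), toFun (insert a A) ≤ toFun A + 1
  union_add_inter_le : ∀ A B : Finset α, toFun (A ∪ B) + toFun (A ∩ B) ≤ toFun A + toFun B

namespace FinsetRank

variable {α : Type*} [DecidableEq α]

instance : CoeFun (FinsetRank α) (fun _ ↦ Finset α → ℕ) := ⟨toFun⟩

variable (r : FinsetRank α)

lemma union_le_add_card (A B : Finset α) : r (A ∪ B) ≤ r A + #B := by
  induction B using Finset.induction with
  | empty => simp
  | insert b B hb ih =>
    rw [union_insert, card_insert_of_notMem hb]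
    linarith [r.insert_le (A ∪ B) b]

lemma insert_eq_of_subset {A B : Finset α} {x : α} (hAB : A ⊆ B) (hx : r (insert x A) = r A) :
    r (insert x B) = r B := by
  have hsub := r.union_add_inter_le (insert x A) B
  have hunion : insert x A ∪ B = insert x B := by
    rw [insert_union, union_eq_right.2 hAB]
  have hinter : r A ≤ r (insert x A ∩ B) :=
    r.mono fun y hy ↦ mem_inter.2 ⟨mem_insert_of_mem hy, hAB hy⟩
  have hmono : r B ≤ r (insert x B) := r.mono (subset_insert x B)
  rw [hunion, hx] at hsub
  omega

lemma union_eq_of_forall_insert_eq {Z X : Finset α} (hX : ∀ x ∈ X, r (insert x Z) = r Z) :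
    r (Z ∪ X) = r Z := by
  induction X using Finset.induction with
  | empty => simp
  | insert x X hx ih =>
    rw [union_insert, r.insert_eq_of_subset subset_union_left (hX x (mem_insert_self x X)),
      ih fun y hy ↦ hX y (mem_insert_of_mem hy)]

def contract (e : α) : FinsetRank α where
  toFun A := r (insert e A) - r {e}
  map_empty := by simp
  mono A B h := Nat.sub_le_sub_right (r.mono (insert_subset_insert e h)) _
  insert_le A a := by
    have h1 := r.insert_le (insert e A) a
    have h2 : r {e} ≤ r (insert e A) := r.mono (by simp)
    rw [insert_comm] at h1
    show r (insert e (insert a A)) - r {e} ≤ r (insert e A) - r {e} + 1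
    omega
  union_add_inter_le A B := by
    have h := r.union_add_inter_le (insert e A) (insert e B)
    have h_le (C : Finset α) : r {e} ≤ r (insert e C) := r.mono (by simp)
    have := h_le A; have := h_le B; have := h_le (A ∪ B); have := h_le (A ∩ B)
    rw [← insert_union_distrib, ← insert_inter_distrib] at h
    show r (insert e (A ∪ B)) - r {e} + (r (insert e (A ∩ B)) - r {e}) ≤
      r (insert e A) - r {e} + (r (insert e B) - r {e})
    omega

lemma contract_apply (e : α) (A : Finset α) : r.contract e A = r (insert e A) - r {e} := rfl

variable {ι : Type*} [DecidableEq ι]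

def IsTight (E : Finset α) (c : α → ι) (v : ι → ℕ) (S : Finset ι) : Prop :=
  r {e ∈ E | c e ∈ S} = ∑ i ∈ S, v i

variable {r} {E : Finset α} {c : α → ι} {v : ι → ℕ}

lemma IsTight.union (hall : ∀ S, ∑ i ∈ S, v i ≤ r {e ∈ E | c e ∈ S}) {S T : Finset ι}
    (hS : r.IsTight E c v S) (hT : r.IsTight E c v T) : r.IsTight E c v (S ∪ T) := by
  have hsub := r.union_add_inter_le {e ∈ E | c e ∈ S} {e ∈ E | c e ∈ T}
  rw [← filter_or, ← filter_and] at hsub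
  simp only [← mem_union, ← mem_inter] at hsub
  have := sum_union_inter (s₁ := S) (s₂ := T) (f := v)
  have := hall (S ∪ T)
  have := hall (S ∩ T)
  unfold IsTight at *
  omega

/-- Contracting such an `e` preserves the Rado condition, with the demand of `i` lowered by one. -/
lemma exists_mem_forall_sum_lt_insert [Fintype ι]
    (hall : ∀ S, ∑ i ∈ S, v i ≤ r {e ∈ E | c e ∈ S}) {i : ι} (hi : 0 < v i) :
    ∃ e ∈ E, c e = i ∧ ∀ S, i ∉ S → ∑ j ∈ S, v j < r (insert e {e ∈ E | c e ∈ S}) := by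
  classical
  by_contra! hbad
  let P (S : Finset ι) : Prop := i ∉ S ∧ r.IsTight E c v S
  -- the largest tight set of colours avoiding `i`
  set T := (univ.filter P).sup id
  have hT : P T := by
    refine sup_induction (p := P) ⟨notMem_empty i, by simp [IsTight, r.map_empty]⟩ ?_ (by simp)
    rintro S ⟨hiS, hS⟩ S' ⟨hiS', hS'⟩
    exact ⟨by simp [hiS, hiS'], hS.union hall hS'⟩
  have hspan : ∀ e ∈ {e ∈ E | c e = i},
      r (insert e {e ∈ E | c e ∈ T}) = r {e ∈ E | c e ∈ T} := by
    intro e he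
    rw [mem_filter] at he
    obtain ⟨S, hiS, hS⟩ := hbad e he.1 he.2
    have hle := r.mono (subset_insert e {e ∈ E | c e ∈ S})
    have hST : S ⊆ T :=
      le_sup (f := id) (mem_filter.2 ⟨mem_univ S, hiS, (hle.trans hS).antisymm (hall S)⟩)
    exact r.insert_eq_of_subset (monotone_filter_right E fun _ _ h ↦ hST h)
      ((hS.trans (hall S)).antisymm hle)
  have hclass : {e ∈ E | c e ∈ insert i T} = {e ∈ E | c e ∈ T} ∪ {e ∈ E | c e = i} := by
    rw [← filter_or]; simp [or_comm]
  have := hall (insert i T)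
  rw [hclass, r.union_eq_of_forall_insert_eq hspan, hT.2, sum_insert hT.1] at this
  omega

/-- Rado's theorem for a matroid given by its rank function. -/
theorem exists_indep_card_filter_eq [Fintype ι] (r : FinsetRank α) (E : Finset α) (c : α → ι)
    (v : ι → ℕ) (hall : ∀ S, ∑ i ∈ S, v i ≤ r {e ∈ E | c e ∈ S}) :
    ∃ I ⊆ E, r I = #I ∧ ∀ i, #{e ∈ I | c e = i} = v i := by
  obtain ⟨n, hn⟩ : ∃ n, ∑ i, v i = n := ⟨_, rfl⟩
  induction n generalizing r E v with
  | zero =>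
    refine ⟨∅, empty_subset E, r.map_empty, fun i ↦ ?_⟩
    simp [(sum_eq_zero_iff.1 hn) i (mem_univ i)]
  | succ n ih =>
    obtain ⟨i, hi⟩ : ∃ i, 0 < v i := by
      by_contra! h
      simp [fun i ↦ Nat.le_zero.1 (h i)] at hn
    obtain ⟨e, heE, hce, hgood⟩ := exists_mem_forall_sum_lt_insert hall hi
    have hre : r {e} = 1 := by
      have h1 := r.insert_le ∅ e
      have h2 := hgood ∅ (notMem_empty i)
      simp only [insert_empty, r.map_empty, sum_empty, notMem_empty, filter_false, zero_add]
        at h1 h2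
      omega
    let v' := Function.update v i (v i - 1)
    have hall' : ∀ S, ∑ j ∈ S, v' j ≤ r.contract e {f ∈ E.erase e | c f ∈ S} := by
      intro S
      rw [contract_apply, filter_erase, hre]
      by_cases hiS : i ∈ S
      · have heS : e ∈ {f ∈ E | c f ∈ S} := mem_filter.2 ⟨heE, hce ▸ hiS⟩
        have := hall S
        rw [insert_erase heS, sum_update_of_mem hiS]
        rw [sum_eq_add_sum_sdiff_singleton_of_mem hiS] at this
        omega
      · have heS : e ∉ {f ∈ E | c f ∈ S} := fun h ↦ hiS (hce ▸ (mem_filter.1 h).2)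
        have := hgood S hiS
        rw [erase_eq_of_notMem heS, sum_update_of_notMem hiS]
        omega
    have hn' : ∑ j, v' j = n := by
      rw [sum_update_of_mem (mem_univ i)]
      rw [sum_eq_add_sum_sdiff_singleton_of_mem (mem_univ i)] at hn
      omega
    obtain ⟨I, hIE, hIr, hIv⟩ := ih (r.contract e) (E.erase e) v' hall' hn'
    have heI : e ∉ I := fun h ↦ (mem_erase.1 (hIE h)).1 rfl
    refine ⟨insert e I, insert_subset heE (hIE.trans (erase_subset e E)), ?_, fun j ↦ ?_⟩
    · rw [contract_apply, hre] at hIr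
      have := r.mono (singleton_subset_iff.2 (mem_insert_self e I))
      rw [card_insert_of_notMem heI]
      omega
    · rw [filter_insert]
      by_cases hj : j = i
      · subst hj
        rw [if_pos hce, card_insert_of_notMem (fun h ↦ heI (mem_filter.1 h).1), hIv j]
        simp only [Function.update_self, v']
        omega
      · rw [if_neg (by rw [hce]; exact Ne.symm hj), hIv j]
        simp [v', hj]

section Linear

open Module Submodule

variable {M : Type*} (K : Type*) [DivisionRing K] [AddCommGroup M] [Module K M]
  [FiniteDimensional K M]

noncomputable def ofLinear (f : α → M) : FinsetRank α where
  toFun A := finrank K (span K (f '' A))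
  map_empty := by simp
  mono _ _ h := finrank_mono (span_mono (Set.image_mono (coe_subset.2 h)))
  insert_le A a := by
    rw [coe_insert, Set.image_insert_eq, span_insert, add_comm]
    refine (finrank_add_le_finrank_add_finrank _ _).trans ?_
    gcongr
    simpa using finrank_span_le_card ({f a} : Set M)
  union_add_inter_le A B := by
    rw [← finrank_sup_add_finrank_inf_eq (span K (f '' A)), ← span_union, ← Set.image_union,
      ← coe_union]
    gcongr
    exact finrank_mono (le_inf (span_mono (Set.image_mono (coe_subset.2 inter_subset_left)))
      (span_mono (Set.image_mono (coe_subset.2 inter_subset_right))))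

lemma ofLinear_apply (f : α → M) (A : Finset α) :
    ofLinear K f A = finrank K (span K (f '' A)) := rfl

variable {K}

lemma ofLinear_insert_of_map_eq_zero {f : α → M} {A : Finset α} {x : α} (φ : M →ₗ[K] K)
    (hA : ∀ a ∈ A, φ (f a) = 0) (hx : φ (f x) ≠ 0) :
    ofLinear K f (insert x A) = ofLinear K f A + 1 := by
  have hlt : span K (f '' A) < span K (f '' ↑(insert x A)) := by
    refine lt_of_le_of_ne (span_mono (Set.image_mono (coe_subset.2 (subset_insert x A))))
      fun h ↦ hx ?_
    have hle : span K (f '' A) ≤ LinearMap.ker φ :=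
      span_le.2 (by rintro _ ⟨a, ha, rfl⟩; exact hA a ha)
    exact hle (h ▸ subset_span (Set.mem_image_of_mem f (mem_insert_self x A)))
  have := finrank_lt_finrank_of_lt hlt
  have := (ofLinear K f).insert_le A x
  rw [ofLinear_apply, ofLinear_apply] at *
  omega

end Linear

end FinsetRank

section Graphic

open Module Submodule

variable {V : Type*}

def sumCoords (C : Finset V) : (V → ZMod 2) →ₗ[ZMod 2] ZMod 2 := ∑ x ∈ C, LinearMap.proj x

lemma sumCoords_apply (C : Finset V) (y : V → ZMod 2) : sumCoords C y = ∑ x ∈ C, y x := by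
  simp [sumCoords]

variable [DecidableEq V]

/-- The incidence vector of an edge over `𝔽₂`, where it needs no orientation. Loops go to `0`. -/
def incidenceVec : Sym2 V → V → ZMod 2 :=
  Sym2.lift ⟨fun u v ↦ Pi.single u 1 + Pi.single v 1, fun _ _ ↦ add_comm _ _⟩

lemma incidenceVec_mk (u v : V) : incidenceVec s(u, v) = Pi.single u 1 + Pi.single v 1 := rfl

lemma incidenceVec_apply_of_notMem {e : Sym2 V} {x : V} (h : x ∉ e) : incidenceVec e x = 0 := by
  induction e using Sym2.ind with
  | _ u v =>
    rw [Sym2.mem_iff, not_or] at h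
    simp [incidenceVec_mk, Ne.symm h.1, Ne.symm h.2]

lemma incidenceVec_mk_apply_left {u v : V} (h : u ≠ v) : incidenceVec s(u, v) u = 1 := by
  simp [incidenceVec_mk, Ne.symm h]

lemma sum_incidenceVec_mk (C : Finset V) (u v : V) :
    ∑ x ∈ C, incidenceVec s(u, v) x = (if u ∈ C then 1 else 0) + (if v ∈ C then 1 else 0) := by
  simp [incidenceVec_mk, sum_add_distrib, sum_pi_single']

variable [Fintype V]

variable (V) in
noncomputable def graphicRank : FinsetRank (Sym2 V) := FinsetRank.ofLinear (ZMod 2) incidenceVec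

lemma graphicRank_image_mk_eq_card {u : V} {W : Finset V} (hu : u ∉ W) :
    graphicRank V (W.image (s(u, ·))) = #W := by
  induction W using Finset.induction with
  | empty => exact (graphicRank V).map_empty
  | insert w W hw ih =>
    rw [mem_insert, not_or] at hu
    rw [image_insert, graphicRank, FinsetRank.ofLinear_insert_of_map_eq_zero (LinearMap.proj w),
      ← graphicRank, ih hu.2, card_insert_of_notMem hw]
    · simp only [mem_image, LinearMap.coe_proj, Function.eval, forall_exists_index, and_imp]
      rintro _ x hx rfl
      exact incidenceVec_apply_of_notMem
        (by simp [Sym2.mem_iff, Ne.symm hu.1, (ne_of_mem_of_not_mem hx hw).symm])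
    · rw [LinearMap.proj_apply, Sym2.eq_swap, incidenceVec_mk_apply_left (Ne.symm hu.1)]
      exact one_ne_zero

lemma graphicRank_insert_of_not_reachable {S : Finset (Sym2 V)} {u v : V}
    (h : ¬ (fromEdgeSet (S : Set (Sym2 V))).Reachable u v) :
    graphicRank V (insert s(u, v) S) = graphicRank V S + 1 := by
  classical
  let C : Finset V := {x | (fromEdgeSet (S : Set (Sym2 V))).Reachable u x}
  refine FinsetRank.ofLinear_insert_of_map_eq_zero (sumCoords C) (fun e he ↦ ?_) ?_
  · induction e using Sym2.ind with
    | _ a b =>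
      have hab : a ∈ C ↔ b ∈ C := by
        by_cases hab : a = b
        · rw [hab]
        · have hadj : (fromEdgeSet (S : Set (Sym2 V))).Adj a b := by simp [he, hab]
          simpa [C] using ⟨fun h ↦ h.trans hadj.reachable, fun h ↦ h.trans hadj.reachable.symm⟩
      rw [sumCoords_apply, sum_incidenceVec_mk]
      split_ifs <;> simp_all [CharTwo.add_self_eq_zero]
  · have hv : v ∉ C := by simpa [C] using h
    simp [sumCoords_apply, sum_incidenceVec_mk, C, hv]

lemma graphicRank_le_card_sub_one [Nonempty V] (S : Finset (Sym2 V)) :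
    graphicRank V S ≤ Fintype.card V - 1 := by
  let φ := sumCoords (univ : Finset V)
  have hS : span (ZMod 2) (incidenceVec '' S) ≤ LinearMap.ker φ := by
    rw [span_le]
    rintro _ ⟨e, -, rfl⟩
    induction e using Sym2.ind with
    | _ a b => simp [φ, sumCoords_apply, sum_incidenceVec_mk, CharTwo.add_self_eq_zero]
  have hker : LinearMap.ker φ ≠ ⊤ := by
    obtain ⟨u⟩ := ‹Nonempty V›
    intro h
    have := LinearMap.congr_fun (LinearMap.ker_eq_top.1 h) (Pi.single u 1)
    simp [φ, sumCoords_apply] at this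
  have := (finrank_mono hS).trans_lt (finrank_lt hker)
  rw [finrank_fintype_fun_eq_card] at this
  rw [graphicRank, FinsetRank.ofLinear_apply]
  omega

lemma connected_of_graphicRank_eq [Nonempty V] {S : Finset (Sym2 V)}
    (h : graphicRank V S = Fintype.card V - 1) : (fromEdgeSet (S : Set (Sym2 V))).Connected := by
  refine (connected_iff _).2 ⟨fun u v ↦ ?_, inferInstance⟩
  by_contra huv
  have := graphicRank_le_card_sub_one (insert s(u, v) S)
  rw [graphicRank_insert_of_not_reachable huv] at this
  omega

/-- Removing the star at a vertex `u` lowers the rank, and the star has size at most the rank since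
it is independent; induct on the rest. -/
lemma two_mul_card_le_graphicRank_mul_succ (S : Finset (Sym2 V)) (hS : ∀ e ∈ S, ¬ e.IsDiag) :
    2 * #S ≤ graphicRank V S * (graphicRank V S + 1) := by
  induction S using Finset.strongInduction with
  | _ S ih =>
  obtain rfl | ⟨e, he⟩ := S.eq_empty_or_nonempty
  · simp
  induction e using Sym2.ind with
  | _ u v =>
  have huv : u ≠ v := fun h ↦ hS _ he (by simp [h])
  let N : Finset V := {w | s(u, w) ∈ S}
  let star := N.image (s(u, ·))
  have hstar : star ⊆ S := by simp [star, N, image_subset_iff]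
  have huN : u ∉ N := fun h ↦ hS _ (mem_filter.1 h).2 (by simp)
  have hS' : S \ star ⊂ S := sdiff_ssubset hstar ⟨s(u, v), mem_image_of_mem _ (by simp [N, he])⟩
  have hcard : #(S \ star) + #star = #S := card_sdiff_add_card_eq_card hstar
  have hdeg : #star ≤ graphicRank V S :=
    (card_image_le.trans (graphicRank_image_mk_eq_card huN).ge).trans ((graphicRank V).mono hstar)
  have hsplit : graphicRank V S ≤ graphicRank V (S \ star) + #star := by
    simpa [sdiff_union_of_subset hstar] using (graphicRank V).union_le_add_card (S \ star) star
  have hdrop : graphicRank V (S \ star) + 1 ≤ graphicRank V S := by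
    have hu : ∀ g ∈ S \ star, u ∉ g := by
      intro g hg hug
      obtain ⟨w, rfl⟩ := Sym2.mem_iff_exists.1 hug
      exact (mem_sdiff.1 hg).2 (mem_image_of_mem _ (by simp [N, (mem_sdiff.1 hg).1]))
    rw [graphicRank, ← FinsetRank.ofLinear_insert_of_map_eq_zero (x := s(u, v))
      (LinearMap.proj u) (fun g hg ↦ incidenceVec_apply_of_notMem (hu g hg))
      (by simp [incidenceVec_mk_apply_left huv])]
    exact (FinsetRank.ofLinear _ _).mono (insert_subset he sdiff_subset)
  have := ih _ hS' fun e he ↦ hS e (mem_sdiff.1 he).1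
  obtain ⟨r, hr⟩ : ∃ r, graphicRank V S = r + 1 := ⟨_, (Nat.sub_add_cancel (by omega)).symm⟩
  have : graphicRank V (S \ star) * (graphicRank V (S \ star) + 1) ≤ r * (r + 1) :=
    Nat.mul_le_mul (by omega) (by omega)
  rw [hr]
  nlinarith

lemma le_graphicRank_of_mul_succ_le {S : Finset (Sym2 V)} (hS : ∀ e ∈ S, ¬ e.IsDiag) {a : ℕ}
    (ha : a * (a + 1) ≤ 2 * #S) : a ≤ graphicRank V S := by
  by_contra! h
  have := two_mul_card_le_graphicRank_mul_succ S hS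
  have : graphicRank V S * (graphicRank V S + 1) < a * (a + 1) :=
    Nat.mul_lt_mul'' h (by omega)
  omega

theorem exists_isTree_card_colour_eq [Nonempty V] {ι : Type*} [Fintype ι] [DecidableEq ι]
    (E : Finset (Sym2 V)) (hE : ∀ e ∈ E, ¬ e.IsDiag) (c : Sym2 V → ι) (v : ι → ℕ)
    (hv : ∑ i, v i + 1 = Fintype.card V)
    (hall : ∀ S, ∑ i ∈ S, v i ≤ graphicRank V {e ∈ E | c e ∈ S}) :
    ∃ T : SimpleGraph V, T.IsTree ∧ T.edgeSet ⊆ E ∧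
      ∀ i, {e ∈ T.edgeSet | c e = i}.ncard = v i := by
  obtain ⟨I, hIE, hIr, hIv⟩ := FinsetRank.exists_indep_card_filter_eq _ E c v hall
  have hI : #I + 1 = Fintype.card V := by
    rw [card_eq_sum_card_fiberwise (fun e _ ↦ mem_univ (c e)), ← hv]
    simp [hIv]
  have hedges : (fromEdgeSet (I : Set (Sym2 V))).edgeSet = I := by
    rw [edgeSet_fromEdgeSet, sdiff_eq_left, Set.disjoint_left]
    exact fun e he ↦ hE e (hIE he)
  refine ⟨fromEdgeSet I, isTree_iff_connected_and_card.2 ⟨?_, ?_⟩,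
    hedges.trans_subset (coe_subset.2 hIE), fun i ↦ ?_⟩
  · exact connected_of_graphicRank_eq (by omega)
  · rw [hedges, Nat.card_coe_set_eq, Set.ncard_coe_finset, Nat.card_eq_fintype_card, hI]
  · rw [hedges, ← hIv i, ← Set.ncard_coe_finset, coe_filter]
    rfl

end Graphic

lemma card_filter_mem_eq_sum {α ι : Type*} [DecidableEq ι] (E : Finset α) (c : α → ι)
    (S : Finset ι) : #{e ∈ E | c e ∈ S} = ∑ i ∈ S, #{e ∈ E | c e = i} := by
  refine (card_eq_sum_card_fiberwise (f := c) (t := S) fun e he ↦ (mem_filter.1 he).2).trans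
    (sum_congr rfl fun i hi ↦ congrArg card ?_)
  rw [filter_filter]
  exact filter_congr fun e _ ↦ ⟨fun h ↦ h.2, fun h ↦ ⟨h ▸ hi, h⟩⟩

lemma card_mul_card_filter_eq {α ι : Type*} [Fintype ι] [DecidableEq ι] (E : Finset α)
    (c : α → ι) (h : ∀ i j, #{e ∈ E | c e = i} = #{e ∈ E | c e = j}) (i : ι) :
    Fintype.card ι * #{e ∈ E | c e = i} = #E := by
  rw [card_eq_sum_card_fiberwise (s := E) (fun e _ ↦ mem_univ (c e)), sum_congr rfl fun j _ ↦ h j i,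
    sum_const, card_univ, smul_eq_mul]

theorem stmt_6_general (k t : ℕ) (hk : 1 ≤ k)
    (c : Sym2 (Fin (2 * k * t + 1)) → Fin k)
    (hbal : ∀ i j : Fin k,
      {e ∈ (⊤ : SimpleGraph (Fin (2 * k * t + 1))).edgeSet | c e = i}.ncard =
        {e ∈ (⊤ : SimpleGraph (Fin (2 * k * t + 1))).edgeSet | c e = j}.ncard) :
    ∃ T : SimpleGraph (Fin (2 * k * t + 1)), T.IsTree ∧
      ∀ i : Fin k, {e ∈ T.edgeSet | c e = i}.ncard = 2 * t := by
  classical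
  let E := (⊤ : SimpleGraph (Fin (2 * k * t + 1))).edgeFinset
  have hE : ∀ e ∈ E, ¬ e.IsDiag := fun e he ↦ not_isDiag_of_mem_edgeSet _ (mem_edgeFinset.1 he)
  have hclass (i : Fin k) : #{e ∈ E | c e = i} = t * (2 * k * t + 1) := by
    have hbal' (i j : Fin k) : #{e ∈ E | c e = i} = #{e ∈ E | c e = j} := by
      simpa [← Set.ncard_coe_finset, E] using hbal i j
    have hchoose : (2 * k * t + 1).choose 2 = k * (t * (2 * k * t + 1)) := by
      rw [Nat.choose_two_right, Nat.add_sub_cancel,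
        show (2 * k * t + 1) * (2 * k * t) = 2 * (k * (t * (2 * k * t + 1))) by ring,
        Nat.mul_div_cancel_left _ two_pos]
    have := card_mul_card_filter_eq E c hbal' i
    rw [Fintype.card_fin, card_edgeFinset_top_eq_card_choose_two, Fintype.card_fin, hchoose] at this
    exact Nat.eq_of_mul_eq_mul_left hk this
  -- with `a = 2t|S| ≤ 2kt`, the `a (2kt + 1)` edges of the colours in `S` force rank `≥ a`
  have hall (S : Finset (Fin k)) :
      ∑ _i ∈ S, 2 * t ≤ graphicRank (Fin (2 * k * t + 1)) {e ∈ E | c e ∈ S} := by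
    refine le_graphicRank_of_mul_succ_le (fun e he ↦ hE e (mem_filter.1 he).1) ?_
    have hS : #S ≤ k := by simpa using card_le_univ S
    rw [card_filter_mem_eq_sum, sum_congr rfl fun i _ ↦ hclass i, sum_const, smul_eq_mul,
      sum_const, smul_eq_mul]
    calc #S * (2 * t) * (#S * (2 * t) + 1) ≤ #S * (2 * t) * (2 * k * t + 1) :=
          Nat.mul_le_mul_left _ (by nlinarith)
      _ = 2 * (#S * (t * (2 * k * t + 1))) := by ring
  obtain ⟨T, hT, -, hcount⟩ := exists_isTree_card_colour_eq E hE c _ (by simp; ring) hall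
  exact ⟨T, hT, hcount⟩

/-- every colour-balanced `k`-edge-colouring of `K_{2kt+1}` admits a
colour-balanced spanning tree (each colour on exactly `2t` edges). -/
theorem stmt_6 (k t : ℕ) (hk : 1 ≤ k) (ht : 1 ≤ t)
    (c : Sym2 (Fin (2 * k * t + 1)) → Fin k)
    (hbal : ∀ i j : Fin k,
      {e ∈ (⊤ : SimpleGraph (Fin (2 * k * t + 1))).edgeSet | c e = i}.ncard =
        {e ∈ (⊤ : SimpleGraph (Fin (2 * k * t + 1))).edgeSet | c e = j}.ncard) :
    ∃ T : SimpleGraph (Fin (2 * k * t + 1)), T.IsTree ∧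
      ∀ i : Fin k, {e ∈ T.edgeSet | c e = i}.ncard = 2 * t :=
  stmt_6_general k t hk c hbal
end

section
/- For every r ≥ 2 there is a constant A_r > 0 such that the following holds. Let n ≥ 1, k ≥ 1, and let h : E(K_{rn}^{(r)}) → ℝ^k satisfy ‖h(e)‖₁ ≤ 1 for every hyperedge e. Then the vertex set of K_{rn}^{(r)} can be partitioned into r parts V₁,…,V_r each of size n such that the set H of hyperedges meeting every part in exactly one vertex satisfies ‖h(H) − (n^r/C(rn,r))·h(E(K_{rn}^{(r)}))‖₁ ≤ A_r·√k·n^{r−1}. -/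
/-!
Take a fixed balanced partition `π` of the vertices and compose it with a permutation `σ`.
With `p = n^r / C(rn, r)` the proportion of transversals, put `x s = 1[s transversal] - p`;
the discrepancy vector of `π ∘ σ` is `∑ₑ x(σ e) h(e)`. Averaged over `σ`, its squared
`ℓ²` norm is `∑_{e,f} c(e,f) ⟨h e, h f⟩` with `c(e,f) = 𝔼_σ x(σ e) x(σ f)`. By symmetry,
`c(e, f)` depends only on `|e ∩ f|`, and because `x` has zero sum over all `r`-sets and over
every vertex star, `∑_f c(e,f) = ∑_f |e ∩ f| c(e,f) = 0`. These two relations bound the pairs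
with `|e ∩ f| ≤ 1` by the `O(r² N^{r-2})` pairs with `|e ∩ f| ≥ 2`, so some `σ` has squared
discrepancy `O(r^{2r} n^{2r-2})`, and Cauchy–Schwarz converts this into the `ℓ¹` bound with
`A_r = √(2r+2) r^r`.
-/

open Finset

section PermImage

variable {α : Type*} [Fintype α] [DecidableEq α]

theorem card_filter_mem_and_mem (s t : Finset α) :
    #{x | x ∈ s ∧ x ∈ t} = #(s ∩ t) ∧ #{x | x ∈ s ∧ x ∉ t} = #s - #(s ∩ t) ∧
      #{x | x ∉ s ∧ x ∈ t} = #t - #(s ∩ t) ∧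
      #{x | x ∉ s ∧ x ∉ t} = Fintype.card α - (#s + #t - #(s ∩ t)) := by
  have hunion := card_union_add_card_inter s t
  refine ⟨?_, ?_, ?_, ?_⟩
  · congr 1; ext; simp
  · rw [← inter_comm, ← card_sdiff]; congr 1; ext; simp
  · rw [← card_sdiff]; congr 1; ext; simp [and_comm]
  · rw [show ({x | x ∉ s ∧ x ∉ t} : Finset α) = (s ∪ t)ᶜ by ext; simp, card_compl]
    omega

theorem exists_perm_image_eq_and_image_eq {e f e' f' : Finset α} (he : #e = #e')
    (hf : #f = #f') (hef : #(e ∩ f) = #(e' ∩ f')) :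
    ∃ τ : Equiv.Perm α, e.image τ = e' ∧ f.image τ = f' := by
  -- `τ` matches the four Venn regions of `(e, f)` with those of `(e', f')`, which have equal sizes.
  let tag (s t : Finset α) (x : α) : Bool × Bool := (decide (x ∈ s), decide (x ∈ t))
  have hfiber : ∀ c, Fintype.card {x // tag e f x = c} = Fintype.card {x // tag e' f' x = c} := by
    obtain ⟨h₁, h₂, h₃, h₄⟩ := card_filter_mem_and_mem e f
    obtain ⟨h₁', h₂', h₃', h₄'⟩ := card_filter_mem_and_mem e' f'
    rintro ⟨_ | _, _ | _⟩ <;>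
      simp only [Fintype.card_subtype, tag, Prod.mk.injEq, decide_eq_true_iff,
        decide_eq_false_iff_not] <;> simp_all
  let τ := Equiv.ofFiberEquiv fun c => Fintype.equivOfCardEq (hfiber c)
  have hτ : ∀ x, tag e' f' (τ x) = tag e f x := Equiv.ofFiberEquiv_map _
  refine ⟨τ, ?_, ?_⟩ <;> ext y <;> obtain ⟨x, rfl⟩ := τ.surjective y
  · simpa [tag] using (congrArg Prod.fst (hτ x)).symm
  · simpa [tag] using (congrArg Prod.snd (hτ x)).symm

theorem sum_perm_image_eq_of_card_inter_eq {M : Type*} [AddCommMonoid M]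
    (G : Finset α → Finset α → M) {e f e' f' : Finset α} (he : #e = #e') (hf : #f = #f')
    (hef : #(e ∩ f) = #(e' ∩ f')) :
    ∑ σ : Equiv.Perm α, G (e.image σ) (f.image σ) =
      ∑ σ : Equiv.Perm α, G (e'.image σ) (f'.image σ) := by
  obtain ⟨τ, rfl, rfl⟩ := exists_perm_image_eq_and_image_eq he hf hef
  simp only [image_image, ← Equiv.Perm.coe_mul]
  exact (Equiv.sum_comp (Equiv.mulRight τ) _).symm

theorem image_perm_mem_powersetCard_univ {r : ℕ} (σ : Equiv.Perm α) {s : Finset α}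
    (hs : s ∈ powersetCard r univ) : s.image σ ∈ powersetCard r univ := by
  rwa [mem_powersetCard_univ, card_image_of_injective _ σ.injective, ← mem_powersetCard_univ]

theorem sum_powersetCard_image_perm {M : Type*} [AddCommMonoid M] (r : ℕ) (σ : Equiv.Perm α)
    (F : Finset α → M) :
    ∑ s ∈ powersetCard r univ, F (s.image σ) = ∑ s ∈ powersetCard r univ, F s :=
  sum_nbij' (·.image σ) (·.image σ.symm) (fun _ hs => image_perm_mem_powersetCard_univ σ hs)
    (fun _ hs => image_perm_mem_powersetCard_univ σ.symm hs) (fun s _ => by simp [image_image])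
    (fun s _ => by simp [image_image]) fun _ _ => rfl

end PermImage

theorem sum_abs_eq_abs_sum_of_forall_eq {ι : Type*} {s : Finset ι} {c : ι → ℝ}
    (hc : ∀ i ∈ s, ∀ i' ∈ s, c i = c i') : ∑ i ∈ s, |c i| = |∑ i ∈ s, c i| := by
  rcases s.eq_empty_or_nonempty with rfl | ⟨i₀, hi₀⟩
  · simp
  · rw [sum_congr rfl fun i hi => hc i hi i₀ hi₀,
      sum_congr rfl fun i hi => congrArg abs (hc i hi i₀ hi₀), sum_const, sum_const, abs_nsmul]

theorem sum_abs_le_of_sum_eq_zero_of_sum_mul_eq_zero {ι : Type*} {s : Finset ι} {c : ι → ℝ}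
    {j : ι → ℕ} {r : ℕ} {B : ℝ} (hj : ∀ i ∈ s, j i ≤ r) (hB : ∀ i ∈ s, |c i| ≤ B)
    (hc : ∀ i ∈ s, ∀ i' ∈ s, j i = j i' → c i = c i')
    (h₀ : ∑ i ∈ s, c i = 0) (h₁ : ∑ i ∈ s, (j i : ℝ) * c i = 0) :
    ∑ i ∈ s, |c i| ≤ (2 * r + 2) * #{i ∈ s | 2 ≤ j i} * B := by
  -- On each of the levels `j = 0` and `j = 1` the function `c` is a single value, which `h₁`
  -- and then `h₀` determine from the levels `j ≥ 2`.
  set s₀ := {i ∈ s | j i = 0}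
  set s₁ := {i ∈ s | j i = 1}
  set s₂ := {i ∈ s | 2 ≤ j i}
  have hsplit : ∀ F : ι → ℝ, ∑ i ∈ s, F i = ∑ i ∈ s₀, F i + ∑ i ∈ s₁, F i + ∑ i ∈ s₂, F i := by
    intro F
    have e₁ : {i ∈ s | ¬j i = 0 ∧ j i = 1} = s₁ := filter_congr fun i _ => by omega
    have e₂ : {i ∈ s | ¬j i = 0 ∧ ¬j i = 1} = s₂ := filter_congr fun i _ => by omega
    rw [← sum_filter_add_sum_filter_not s (j · = 0),
      ← sum_filter_add_sum_filter_not (filter (¬j · = 0) s) (j · = 1), filter_filter,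
      filter_filter, e₁, e₂, add_assoc]
  have hlevel : ∀ l, ∀ i ∈ {i ∈ s | j i = l}, ∀ i' ∈ {i ∈ s | j i = l}, c i = c i' := by
    intro l i hi i' hi'
    simp only [mem_filter] at hi hi'
    exact hc i hi.1 i' hi'.1 (hi.2.trans hi'.2.symm)
  set M : ℝ := (#s₂ : ℝ)
  have hB₂ : ∑ i ∈ s₂, |c i| ≤ M * B := by
    simpa [M] using sum_le_sum fun i hi => hB i (mem_filter.1 hi).1
  have hjB₂ : ∑ i ∈ s₂, |(j i : ℝ) * c i| ≤ M * (r * B) := by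
    calc ∑ i ∈ s₂, |(j i : ℝ) * c i| ≤ ∑ i ∈ s₂, r * B := sum_le_sum fun i hi => by
          obtain ⟨hi, -⟩ := mem_filter.1 hi
          rw [abs_mul, Nat.abs_cast]
          exact mul_le_mul (by exact_mod_cast hj i hi) (hB i hi) (abs_nonneg _) (Nat.cast_nonneg _)
      _ = M * (r * B) := by simp [M]
  have hs₁ : ∑ i ∈ s₁, |c i| ≤ M * (r * B) := by
    have hz : ∑ i ∈ s₀, (j i : ℝ) * c i = 0 :=
      sum_eq_zero fun i hi => by simp [(mem_filter.1 hi).2]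
    have ho : ∑ i ∈ s₁, (j i : ℝ) * c i = ∑ i ∈ s₁, c i :=
      sum_congr rfl fun i hi => by simp [(mem_filter.1 hi).2]
    rw [sum_abs_eq_abs_sum_of_forall_eq (hlevel 1),
      show ∑ i ∈ s₁, c i = -∑ i ∈ s₂, (j i : ℝ) * c i by
        linarith [hsplit fun i => (j i : ℝ) * c i], abs_neg]
    exact (abs_sum_le_sum_abs _ _).trans hjB₂
  have hs₀ : ∑ i ∈ s₀, |c i| ≤ M * (r * B) + M * B := by
    rw [sum_abs_eq_abs_sum_of_forall_eq (hlevel 0),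
      show ∑ i ∈ s₀, c i = -(∑ i ∈ s₁, c i + ∑ i ∈ s₂, c i) by linarith [hsplit c], abs_neg]
    refine (abs_add_le _ _).trans (add_le_add ?_ ?_)
    · exact (abs_sum_le_sum_abs _ _).trans hs₁
    · exact (abs_sum_le_sum_abs _ _).trans hB₂
  rw [hsplit]
  linarith

section Covariance

variable {α : Type*} [Fintype α] [DecidableEq α] {r : ℕ} {x : Finset α → ℝ}

theorem sum_filter_mem_eq_zero_of_forall_eq (hsum : ∑ s ∈ powersetCard r univ, x s = 0) {c : ℝ}
    (hc : ∀ u, ∑ s ∈ powersetCard r univ with u ∈ s, x s = c) (u : α) :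
    ∑ s ∈ powersetCard r univ with u ∈ s, x s = 0 := by
  have hdouble : ∑ v : α, ∑ s ∈ powersetCard r univ with v ∈ s, x s = 0 := by
    calc ∑ v : α, ∑ s ∈ powersetCard r univ with v ∈ s, x s
        = ∑ s ∈ powersetCard r univ, ∑ _v ∈ s, x s := by
          simp only [sum_filter]
          rw [sum_comm]
          exact sum_congr rfl fun s _ => (sum_ite_mem univ s _).trans (by rw [univ_inter])
      _ = ∑ s ∈ powersetCard r univ, r * x s := sum_congr rfl fun s hs => by
          rw [sum_const, mem_powersetCard_univ.1 hs, nsmul_eq_mul]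
      _ = 0 := by rw [← mul_sum, hsum, mul_zero]
  have : Nonempty α := ⟨u⟩
  simp only [hc, sum_const, card_univ, nsmul_eq_mul, mul_eq_zero, Nat.cast_eq_zero,
    Fintype.card_ne_zero, false_or] at hdouble
  rw [hc, hdouble]

theorem sum_card_inter_mul_image_perm_eq_zero
    (hstar : ∀ u, ∑ s ∈ powersetCard r univ with u ∈ s, x s = 0) (σ : Equiv.Perm α)
    (e : Finset α) : ∑ f ∈ powersetCard r univ, (#(e ∩ f) : ℝ) * x (f.image σ) = 0 := by
  have hcard : ∀ f : Finset α, (#(e ∩ f) : ℝ) = ∑ v ∈ e, if v ∈ f then 1 else 0 := by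
    intro f
    rw [sum_boole, filter_mem_eq_inter]
  calc ∑ f ∈ powersetCard r univ, (#(e ∩ f) : ℝ) * x (f.image σ)
      = ∑ v ∈ e, ∑ f ∈ powersetCard r univ, if σ v ∈ f.image σ then x (f.image σ) else 0 := by
        simp only [hcard, sum_mul, ite_mul, one_mul, zero_mul, σ.injective.mem_finset_image]
        exact sum_comm
    _ = ∑ v ∈ e, ∑ s ∈ powersetCard r univ, if σ v ∈ s then x s else 0 :=
        sum_congr rfl fun v _ => sum_powersetCard_image_perm r σ fun s => if σ v ∈ s then x s else 0
    _ = 0 := sum_eq_zero fun v _ => by rw [← sum_filter, hstar]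

theorem sum_abs_sum_perm_mul_le (hx : ∀ s ∈ powersetCard r univ, |x s| ≤ 1)
    (hsum : ∑ s ∈ powersetCard r univ, x s = 0)
    (hstar : ∀ u, ∑ s ∈ powersetCard r univ with u ∈ s, x s = 0)
    {e : Finset α} (he : e ∈ powersetCard r univ) :
    ∑ f ∈ powersetCard r univ, |∑ σ : Equiv.Perm α, x (e.image σ) * x (f.image σ)| ≤
      (2 * r + 2) * #{f ∈ powersetCard r univ | 2 ≤ #(e ∩ f)} *
        Fintype.card (Equiv.Perm α) := by
  rw [mem_powersetCard_univ] at he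
  refine sum_abs_le_of_sum_eq_zero_of_sum_mul_eq_zero (j := fun f => #(e ∩ f))
    (fun f _ => he ▸ card_le_card inter_subset_left) (fun f hf => ?_)
    (fun f hf f' hf' hj => ?_) ?_ ?_
  · calc |∑ σ : Equiv.Perm α, x (e.image σ) * x (f.image σ)|
        ≤ ∑ σ : Equiv.Perm α, |x (e.image σ) * x (f.image σ)| := abs_sum_le_sum_abs _ _
      _ ≤ ∑ _σ : Equiv.Perm α, (1 : ℝ) := sum_le_sum fun σ _ => by
        rw [abs_mul]
        exact mul_le_one₀ (hx _ (image_perm_mem_powersetCard_univ σ (mem_powersetCard_univ.2 he)))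
          (abs_nonneg _) (hx _ (image_perm_mem_powersetCard_univ σ hf))
      _ = Fintype.card (Equiv.Perm α) := by simp
  · exact sum_perm_image_eq_of_card_inter_eq (fun a b => x a * x b) rfl
      ((mem_powersetCard_univ.1 hf).trans (mem_powersetCard_univ.1 hf').symm) hj
  · rw [sum_comm]
    refine sum_eq_zero fun σ _ => ?_
    rw [← mul_sum, sum_powersetCard_image_perm r σ x, hsum, mul_zero]
  · simp only [mul_sum]
    rw [sum_comm]
    refine sum_eq_zero fun σ _ => ?_
    simp only [mul_left_comm _ (x (e.image σ))]
    rw [← mul_sum, sum_card_inter_mul_image_perm_eq_zero hstar, mul_zero]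

theorem card_filter_two_le_card_inter_le {e : Finset α} (he : e ∈ powersetCard r univ) :
    #{f ∈ powersetCard r univ | 2 ≤ #(e ∩ f)} ≤ r ^ 2 * Fintype.card α ^ (r - 2) := by
  rw [mem_powersetCard_univ] at he
  have hsub : {f ∈ powersetCard r (univ : Finset α) | 2 ≤ #(e ∩ f)} ⊆
      (powersetCard 2 e ×ˢ powersetCard (r - 2) (univ : Finset α)).image fun dg => dg.2 ∪ dg.1 := by
    intro f hf
    rw [mem_filter, mem_powersetCard_univ] at hf
    obtain ⟨d, hd, hd2⟩ := exists_subset_card_eq hf.2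
    have hdf : d ⊆ f := hd.trans inter_subset_right
    refine mem_image.2 ⟨(d, f \ d), mem_product.2 ⟨mem_powersetCard.2 ⟨hd.trans inter_subset_left,
      hd2⟩, mem_powersetCard_univ.2 ?_⟩, sdiff_union_of_subset hdf⟩
    rw [card_sdiff_of_subset hdf, hf.1, hd2]
  calc #{f ∈ powersetCard r univ | 2 ≤ #(e ∩ f)} ≤ _ := card_le_card hsub
    _ ≤ #(powersetCard 2 e ×ˢ powersetCard (r - 2) (univ : Finset α)) := card_image_le
    _ ≤ r ^ 2 * Fintype.card α ^ (r - 2) := by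
      rw [card_product, card_powersetCard, card_powersetCard, he, card_univ]
      exact Nat.mul_le_mul (Nat.choose_le_pow _ _) (Nat.choose_le_pow _ _)

end Covariance

theorem abs_sum_mul_le_sum_abs_mul_sum_abs {κ : Type*} (s : Finset κ) (u v : κ → ℝ) :
    |∑ i ∈ s, u i * v i| ≤ (∑ i ∈ s, |u i|) * ∑ i ∈ s, |v i| := by
  rw [sum_mul_sum]
  refine (abs_sum_le_sum_abs _ _).trans (sum_le_sum fun i hi => ?_)
  rw [abs_mul]
  exact single_le_sum (f := fun j => |u i| * |v j|) (fun j _ => by positivity) hi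

theorem sum_abs_le_sqrt_card_mul_sum_sq {κ : Type*} (s : Finset κ) (y : κ → ℝ) :
    ∑ i ∈ s, |y i| ≤ √(#s * ∑ i ∈ s, y i ^ 2) :=
  (le_abs_self _).trans <| Real.abs_le_sqrt <| by
    simpa only [sq_abs] using sq_sum_le_card_mul_sum_sq (s := s) (f := fun i => |y i|)

theorem sum_sq_sum_mul_eq {β κ : Type*} [Fintype κ] (S : Finset β) (a : β → ℝ) (h : β → κ → ℝ) :
    ∑ i, (∑ e ∈ S, a e * h e i) ^ 2 =
      ∑ e ∈ S, ∑ f ∈ S, a e * a f * ∑ i, h e i * h f i := by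
  calc ∑ i, (∑ e ∈ S, a e * h e i) ^ 2
      = ∑ i, ∑ e ∈ S, ∑ f ∈ S, a e * h e i * (a f * h f i) :=
        sum_congr rfl fun i _ => by rw [sq, sum_mul_sum]
    _ = ∑ e ∈ S, ∑ f ∈ S, ∑ i, a e * a f * (h e i * h f i) := by
        rw [sum_comm]
        refine sum_congr rfl fun e _ => ?_
        rw [sum_comm]
        exact sum_congr rfl fun f _ => sum_congr rfl fun i _ => by ring
    _ = _ := by simp only [mul_sum]

def secondMomentBound (r N : ℕ) : ℝ :=
  (2 * r + 2) * r ^ 2 * (N : ℝ) ^ r * (N : ℝ) ^ (r - 2)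

section SecondMoment

variable {α κ : Type*} [Fintype α] [DecidableEq α] [Fintype κ] {r : ℕ} {x : Finset α → ℝ}

theorem exists_perm_sum_sq_le (hx : ∀ s ∈ powersetCard r univ, |x s| ≤ 1)
    (hsum : ∑ s ∈ powersetCard r univ, x s = 0)
    (hstar : ∀ u, ∑ s ∈ powersetCard r univ with u ∈ s, x s = 0) (h : Finset α → κ → ℝ)
    (hh : ∀ e ∈ powersetCard r univ, ∑ i, |h e i| ≤ 1) :
    ∃ σ : Equiv.Perm α, ∑ i, (∑ e ∈ powersetCard r univ, x (e.image σ) * h e i) ^ 2 ≤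
      secondMomentBound r (Fintype.card α) := by
  set N := Fintype.card α
  set K := powersetCard r (univ : Finset α)
  set Q : ℝ := (Fintype.card (Equiv.Perm α) : ℝ)
  set D := secondMomentBound r N
  suffices hQ : ∑ σ : Equiv.Perm α, ∑ i, (∑ e ∈ K, x (e.image σ) * h e i) ^ 2 ≤
      ∑ _σ : Equiv.Perm α, D by
    obtain ⟨σ, -, hσ⟩ := exists_le_of_sum_le univ_nonempty hQ
    exact ⟨σ, hσ⟩
  have hcov : ∀ e ∈ K, ∑ f ∈ K, |∑ σ : Equiv.Perm α, x (e.image σ) * x (f.image σ)| ≤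
      (2 * r + 2) * (r ^ 2 * N ^ (r - 2) : ℕ) * Q := fun e he =>
    (sum_abs_sum_perm_mul_le hx hsum hstar he).trans <| by
      gcongr
      exact_mod_cast card_filter_two_le_card_inter_le he
  calc ∑ σ : Equiv.Perm α, ∑ i, (∑ e ∈ K, x (e.image σ) * h e i) ^ 2
      = ∑ e ∈ K, ∑ f ∈ K, (∑ σ : Equiv.Perm α, x (e.image σ) * x (f.image σ)) *
          ∑ i, h e i * h f i := by
        simp only [sum_sq_sum_mul_eq, sum_mul]
        rw [sum_comm]
        exact sum_congr rfl fun e _ => sum_comm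
    _ ≤ ∑ e ∈ K, ∑ f ∈ K, |∑ σ : Equiv.Perm α, x (e.image σ) * x (f.image σ)| := by
        refine sum_le_sum fun e he => sum_le_sum fun f hf => ?_
        refine (le_abs_self _).trans ?_
        rw [abs_mul]
        refine mul_le_of_le_one_right (abs_nonneg _) ?_
        exact (abs_sum_mul_le_sum_abs_mul_sum_abs _ _ _).trans
          (mul_le_one₀ (hh e he) (sum_nonneg fun _ _ => abs_nonneg _) (hh f hf))
    _ ≤ ∑ _e ∈ K, (2 * r + 2) * (r ^ 2 * N ^ (r - 2) : ℕ) * Q := sum_le_sum hcov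
    _ ≤ ∑ _σ : Equiv.Perm α, D := by
        rw [sum_const, sum_const, card_univ, card_powersetCard, card_univ, nsmul_eq_mul,
          nsmul_eq_mul]
        have hK : ((N.choose r : ℕ) : ℝ) ≤ (N : ℝ) ^ r := by exact_mod_cast N.choose_le_pow r
        calc ((N.choose r : ℕ) : ℝ) * ((2 * r + 2) * (r ^ 2 * N ^ (r - 2) : ℕ) * Q)
            ≤ (N : ℝ) ^ r * ((2 * r + 2) * (r ^ 2 * N ^ (r - 2) : ℕ) * Q) := by gcongr
          _ = Q * D := by simp only [D, secondMomentBound]; push_cast; ring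

end SecondMoment

theorem mem_image_iff_of_leftInverse {α ι : Type*} [DecidableEq α] [Fintype ι] {π : α → ι}
    {g : ι → α} (hg : ∀ p, π (g p) = p) (v : α) :
    v ∈ univ.image g ↔ g (π v) = v := by
  refine ⟨?_, fun hv => mem_image.2 ⟨π v, mem_univ _, hv⟩⟩
  rintro hv
  obtain ⟨p, -, rfl⟩ := mem_image.1 hv
  rw [hg]

section Transversal

variable {α ι : Type*} [DecidableEq α] [DecidableEq ι]

def IsTransversal (π : α → ι) (s : Finset α) : Prop :=
  ∀ p, #{v ∈ s | π v = p} = 1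

instance [Fintype ι] (π : α → ι) : DecidablePred (IsTransversal π) :=
  fun s => inferInstanceAs (Decidable (∀ p, #{v ∈ s | π v = p} = 1))

theorem isTransversal_comp_perm_iff (π : α → ι) (σ : Equiv.Perm α) (s : Finset α) :
    IsTransversal (π ∘ σ) s ↔ IsTransversal π (s.image σ) := by
  simp only [IsTransversal, filter_image, card_image_of_injective _ σ.injective,
    Function.comp_apply]

theorem card_filter_isTransversal [Fintype α] [Fintype ι] (π : α → ι) (P : Finset α → Prop)
    [DecidablePred P] :
    #{s ∈ powersetCard (Fintype.card ι) univ | IsTransversal π s ∧ P s} =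
      #{g ∈ Fintype.piFinset fun p => {v | π v = p} | P (univ.image g)} := by
  have hsec : ∀ g ∈ Fintype.piFinset fun p => ({v | π v = p} : Finset α), ∀ p, π (g p) = p :=
    fun g hg p => by simpa using Fintype.mem_piFinset.1 hg p
  refine (card_nbij (fun g => univ.image g) (fun g hg => ?_) (fun g hg g' hg' hgg => ?_)
    (fun s hs => ?_)).symm
  · obtain ⟨hg, hP⟩ := mem_filter.1 hg
    have hinj : Function.Injective g := fun p q hpq => by
      rw [← hsec g hg p, hpq, hsec g hg q]
    refine mem_filter.2 ⟨mem_powersetCard_univ.2 ?_, fun p => ?_, hP⟩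
    · rw [card_image_of_injective _ hinj, card_univ]
    · rw [filter_image, card_image_of_injective _ hinj]
      simp [hsec g hg, filter_eq']
  · funext p
    have hp : g p ∈ univ.image g' := by
      simpa only [← show univ.image g = univ.image g' from hgg] using
        mem_image_of_mem g (mem_univ p)
    obtain ⟨q, -, hq⟩ := mem_image.1 hp
    rw [← hq, ← hsec g' (mem_filter.1 hg').1 q, hq, hsec g (mem_filter.1 hg).1]
  · obtain ⟨-, hT, hP⟩ := mem_filter.1 hs
    choose g hg using fun p => card_eq_one.1 (hT p)
    have hgs : ∀ p, g p ∈ s ∧ π (g p) = p := fun p => by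
      have : g p ∈ {v ∈ s | π v = p} := by rw [hg p]; exact mem_singleton_self _
      exact mem_filter.1 this
    have himage : univ.image g = s := by
      refine (image_subset_iff.2 fun p _ => (hgs p).1).antisymm fun v hv => ?_
      have : v ∈ ({g (π v)} : Finset α) := hg (π v) ▸ mem_filter.2 ⟨hv, rfl⟩
      exact mem_image.2 ⟨π v, mem_univ _, (mem_singleton.1 this).symm⟩
    exact ⟨g, mem_filter.2 ⟨Fintype.mem_piFinset.2 fun p => by simpa using (hgs p).2,
      himage ▸ hP⟩, himage⟩

end Transversal

section BalancedPartition

variable {α ι : Type*} [Fintype α] [DecidableEq α] [Fintype ι] [DecidableEq ι] {π : α → ι}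
  {n : ℕ}

theorem card_filter_isTransversal_of_card_fiber (hπ : ∀ p, #{v | π v = p} = n) :
    #{s ∈ powersetCard (Fintype.card ι) univ | IsTransversal π s} = n ^ Fintype.card ι := by
  simpa [Fintype.card_piFinset, hπ] using card_filter_isTransversal π fun _ => True

theorem card_filter_isTransversal_mem_of_card_fiber (hπ : ∀ p, #{v | π v = p} = n) (u : α) :
    #{s ∈ powersetCard (Fintype.card ι) univ | IsTransversal π s ∧ u ∈ s} =
      n ^ (Fintype.card ι - 1) := by
  rw [card_filter_isTransversal π (u ∈ ·)]
  rw [filter_congr fun g hg => mem_image_iff_of_leftInverse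
    (fun p => by simpa using Fintype.mem_piFinset.1 hg p) u,
    Fintype.card_filter_piFinset_eq_of_mem (fun p => ({v | π v = p} : Finset α)) (π u)
      (by simp), prod_congr rfl fun p _ => hπ p,
    prod_const, card_erase_of_mem (mem_univ _), card_univ]

theorem pow_le_choose_of_card_fiber (hπ : ∀ p, #{v | π v = p} = n) :
    n ^ Fintype.card ι ≤ (Fintype.card α).choose (Fintype.card ι) := by
  calc n ^ Fintype.card ι = #{s ∈ powersetCard (Fintype.card ι) univ | IsTransversal π s} :=
        (card_filter_isTransversal_of_card_fiber hπ).symm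
    _ ≤ (Fintype.card α).choose (Fintype.card ι) := by
        simpa using card_filter_le (powersetCard (Fintype.card ι) (univ : Finset α)) _

variable (π n) in
/-- When every fibre has size `n`, the subtracted constant is the proportion of transversals
among the `card ι`-subsets, so this function has mean zero. -/
noncomputable def transversalExcess (s : Finset α) : ℝ :=
  (if IsTransversal π s then 1 else 0) -
    n ^ Fintype.card ι / (Fintype.card α).choose (Fintype.card ι)

theorem abs_transversalExcess_le_one (hπ : ∀ p, #{v | π v = p} = n) (s : Finset α) :
    |transversalExcess π n s| ≤ 1 := by
  have hp₀ : (0 : ℝ) ≤ n ^ Fintype.card ι / (Fintype.card α).choose (Fintype.card ι) := by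
    positivity
  have hp₁ : (n : ℝ) ^ Fintype.card ι / (Fintype.card α).choose (Fintype.card ι) ≤ 1 :=
    div_le_one_of_le₀ (by exact_mod_cast pow_le_choose_of_card_fiber hπ) (by positivity)
  rw [transversalExcess]
  split_ifs <;> rw [abs_le] <;> constructor <;> linarith

theorem sum_transversalExcess_eq_zero (hπ : ∀ p, #{v | π v = p} = n) :
    ∑ s ∈ powersetCard (Fintype.card ι) univ, transversalExcess π n s = 0 := by
  have hle : (n : ℝ) ^ Fintype.card ι ≤ (Fintype.card α).choose (Fintype.card ι) := by
    exact_mod_cast pow_le_choose_of_card_fiber hπ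
  simp only [transversalExcess, sum_sub_distrib, sum_boole,
    card_filter_isTransversal_of_card_fiber hπ, sum_const, card_powersetCard, card_univ,
    nsmul_eq_mul]
  rcases eq_or_ne ((Fintype.card α).choose (Fintype.card ι) : ℝ) 0 with hC | hC
  · have : (n : ℝ) ^ Fintype.card ι = 0 := le_antisymm (hC ▸ hle) (by positivity)
    push_cast
    simp [hC, this]
  · push_cast
    rw [mul_div_cancel₀ _ hC, sub_self]

theorem sum_filter_mem_transversalExcess_eq_zero (hπ : ∀ p, #{v | π v = p} = n) (u : α) :
    ∑ s ∈ powersetCard (Fintype.card ι) univ with u ∈ s, transversalExcess π n s = 0 := by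
  refine sum_filter_mem_eq_zero_of_forall_eq (sum_transversalExcess_eq_zero hπ)
    (c := (n : ℝ) ^ (Fintype.card ι - 1) -
      ((Fintype.card α - 1).choose (Fintype.card ι - 1) : ℕ) *
        (n ^ Fintype.card ι / (Fintype.card α).choose (Fintype.card ι))) (fun v => ?_) u
  have hK := card_filter_powersetCard_subset {v} univ (Fintype.card ι) (subset_univ _)
    (card_singleton v ▸ Fintype.card_pos_iff.2 ⟨π v⟩)
  simp only [card_singleton, card_univ, singleton_subset_iff] at hK
  simp only [transversalExcess, sum_sub_distrib, sum_boole, filter_filter, sum_const, nsmul_eq_mul,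
    hK, filter_congr fun s _ => and_comm (a := v ∈ s),
    card_filter_isTransversal_mem_of_card_fiber hπ v]
  push_cast
  ring

theorem exists_perm_sum_abs_sum_isTransversal_sub_le {κ : Type*} [Fintype κ]
    (hπ : ∀ p, #{v | π v = p} = n) (h : Finset α → κ → ℝ)
    (hh : ∀ e ∈ powersetCard (Fintype.card ι) univ, ∑ i, |h e i| ≤ 1) :
    ∃ σ : Equiv.Perm α, ∑ i, |∑ e ∈ powersetCard (Fintype.card ι) univ with
        IsTransversal (π ∘ σ) e, h e i - (n : ℝ) ^ Fintype.card ι /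
          ((Fintype.card α).choose (Fintype.card ι) : ℝ) *
          ∑ e ∈ powersetCard (Fintype.card ι) univ, h e i| ≤
      √(Fintype.card κ * secondMomentBound (Fintype.card ι) (Fintype.card α)) := by
  obtain ⟨σ, hσ⟩ := exists_perm_sum_sq_le (fun s _ => abs_transversalExcess_le_one hπ s)
    (sum_transversalExcess_eq_zero hπ) (sum_filter_mem_transversalExcess_eq_zero hπ) h hh
  refine ⟨σ, ?_⟩
  simp only [transversalExcess, sub_mul, ite_mul, one_mul, zero_mul, sum_sub_distrib,
    ← sum_filter, ← mul_sum, isTransversal_comp_perm_iff] at hσ ⊢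
  exact (sum_abs_le_sqrt_card_mul_sum_sq _ _).trans
    (Real.sqrt_le_sqrt (by rw [card_univ]; gcongr))

end BalancedPartition

theorem card_filter_comp_perm_eq {α ι : Type*} [Fintype α] [DecidableEq ι] (π : α → ι)
    (σ : Equiv.Perm α) (p : ι) : #{v | π (σ v) = p} = #{v | π v = p} := by
  simp only [← Fintype.card_subtype]
  exact Fintype.card_congr (σ.subtypeEquiv fun _ => Iff.rfl)

theorem exists_card_fiber_eq_of_fin_mul (r n : ℕ) :
    ∃ π : Fin (r * n) → Fin r, ∀ p, #{v | π v = p} = n := by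
  refine ⟨fun v => (finProdFinEquiv.symm v).1, fun p => ?_⟩
  rw [← Fintype.card_subtype, Fintype.card_congr (finProdFinEquiv.symm.subtypeEquiv
    (q := fun q : Fin r × Fin n => q.1 = p) fun _ => Iff.rfl), Fintype.card_subtype,
    show ({q : Fin r × Fin n | q.1 = p} : Finset _) = {p} ×ˢ univ by ext ⟨a, b⟩; simp [eq_comm]]
  simp

theorem sqrt_mul_secondMomentBound_eq {r : ℕ} (hr : 2 ≤ r) (n k : ℕ) :
    √(k * secondMomentBound r (r * n)) = √(2 * r + 2) * r ^ r * √k * n ^ (r - 1) := by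
  obtain ⟨m, rfl⟩ := Nat.exists_eq_add_of_le' hr
  rw [secondMomentBound, show m + 2 - 2 = m by omega, show m + 2 - 1 = m + 1 by omega,
    show (k : ℝ) * ((2 * ((m + 2 : ℕ) : ℝ) + 2) * ((m + 2 : ℕ) : ℝ) ^ 2 *
      (((m + 2) * n : ℕ) : ℝ) ^ (m + 2) * (((m + 2) * n : ℕ) : ℝ) ^ m) =
      (2 * ((m + 2 : ℕ) : ℝ) + 2) * k * (((m + 2 : ℕ) : ℝ) ^ (m + 2) * (n : ℝ) ^ (m + 1)) ^ 2 by
      push_cast; simp only [mul_pow]; ring,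
    Real.sqrt_mul (by positivity), Real.sqrt_mul (by positivity), Real.sqrt_sq (by positivity)]
  ring

/-- for each `r ≥ 2` there is a constant `A_r > 0` such that the vertex set of
`K_{rn}^{(r)}` can be partitioned into `r` parts of size `n` so that the set of hyperedges
meeting every part exactly once is almost representative:
`‖h(H) − (n^r/C(rn,r))·h(E)‖₁ ≤ A_r·√k·n^{r-1}`. -/
theorem stmt_12 :
    ∀ r : ℕ, 2 ≤ r →
      ∃ A : ℝ, 0 < A ∧
        ∀ (n k : ℕ), 1 ≤ n → 1 ≤ k →
          ∀ h : Finset (Fin (r * n)) → Fin k → ℝ,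
            (∀ e ∈ Finset.powersetCard r (Finset.univ : Finset (Fin (r * n))),
                ∑ i : Fin k, |h e i| ≤ 1) →
            ∃ π : Fin (r * n) → Fin r,
              (∀ p : Fin r, (Finset.univ.filter fun v => π v = p).card = n) ∧
              ∑ i : Fin k,
                  |(∑ e ∈ (Finset.powersetCard r (Finset.univ : Finset (Fin (r * n)))).filter
                        (fun s => ∀ p : Fin r, (s.filter fun v => π v = p).card = 1), h e i) -
                    ((n : ℝ) ^ r / (((r * n).choose r : ℕ) : ℝ)) *
                      ∑ e ∈ Finset.powersetCard r (Finset.univ : Finset (Fin (r * n))), h e i|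
                ≤ A * Real.sqrt k * (n : ℝ) ^ (r - 1) := by
  intro r hr
  refine ⟨√(2 * r + 2) * r ^ r, by positivity, fun n k _ _ h hh => ?_⟩
  obtain ⟨π, hπ⟩ := exists_card_fiber_eq_of_fin_mul r n
  obtain ⟨σ, hσ⟩ := exists_perm_sum_abs_sum_isTransversal_sub_le hπ h (by simpa using hh)
  simp only [Fintype.card_fin] at hσ
  refine ⟨π ∘ σ, fun p => (card_filter_comp_perm_eq π σ p).trans (hπ p), ?_⟩
  -- The statement decides its filter with `Nat.decidableForallFin`, not the instance of
  -- `IsTransversal`, so only the predicates agree definitionally.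
  convert hσ.trans_eq (sqrt_mul_secondMomentBound_eq hr n k) using 6
  rfl
end

section
/- Let F be a graph on r vertices and let H be an n-vertex F-factor, i.e. a vertex-disjoint union of n/r copies of F (with r dividing n). Then H is (r, r³/n)-uniform: V(H) can be partitioned into r independent sets U₁,…,U_r with sizes n_i and average degrees d_i satisfying Σ_{i=1}^r (n_i/n)(d_i − d)² ≤ (r³/n)², where d is the average degree of H. -/
/-!
Colour the vertex `j` of the `i`-th copy of `F` by `j - i (mod r)`. Adjacent vertices lie in the
same copy, so the colouring is proper, and every colour class meets each of the `m` copies in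
exactly one vertex. The degrees met by class `p` are the degrees of `F` read cyclically from `p`,
so the degree sum `S` of a class is squeezed between `⌊m/r⌋ D` and `(⌊m/r⌋ + 1) D`, where
`D ≤ r²` is the degree sum of `F`. Hence `|r S - m D| ≤ r D ≤ r³`, which bounds every term of
the uniformity sum.
-/

/-- The `F`-factor on `m · r` vertices: the disjoint union of `m` copies of the `r`-vertex
graph `F`, realised as the box product with the empty graph on `Fin m`. -/
def Ffactor (m r : ℕ) (F : SimpleGraph (Fin r)) : SimpleGraph (Fin m × Fin r) :=
  SimpleGraph.boxProd (⊥ : SimpleGraph (Fin m)) F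

open Finset Fin.NatCast

namespace Function.Periodic

variable {r : ℕ}

theorem sum_range_mul {M : Type*} [AddCommMonoid M] {f : ℕ → M} (hf : Periodic f r) (k : ℕ) :
    ∑ i ∈ range (k * r), f i = k • ∑ i ∈ range r, f i := by
  induction k with
  | zero => simp
  | succ k ih =>
    rw [Nat.succ_mul, sum_range_add, ih, succ_nsmul]
    congr 1
    exact sum_congr rfl fun i _ => by rw [add_comm]; exact hf.nat_mul k i

theorem abs_mul_sum_range_sub_le {f : ℕ → ℝ} (hf : Periodic f r) (hf0 : 0 ≤ f) (m : ℕ) :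
    |r * ∑ i ∈ range m, f i - m * ∑ i ∈ range r, f i| ≤ r * ∑ i ∈ range r, f i := by
  rcases r.eq_zero_or_pos with rfl | hr
  · simp
  set q := m / r
  have hsum_mono : ∀ {a b : ℕ}, a ≤ b → ∑ i ∈ range a, f i ≤ ∑ i ∈ range b, f i :=
    fun hab => sum_le_sum_of_subset_of_nonneg (range_subset_range.mpr hab) fun i _ _ => hf0 i
  have hqm : q * r ≤ m := Nat.div_mul_le_self m r
  have hmq : m ≤ (q + 1) * r := by rw [add_one_mul]; exact (Nat.lt_div_mul_add hr).le
  have hlow := hsum_mono hqm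
  have hup := hsum_mono hmq
  rw [hf.sum_range_mul, nsmul_eq_mul] at hlow hup
  have hqm_real : (q : ℝ) * r ≤ m := by exact_mod_cast hqm
  have hmq_real : (m : ℝ) ≤ (q + 1) * r := by exact_mod_cast hmq
  have hD : 0 ≤ ∑ i ∈ range r, f i := sum_nonneg fun i _ => hf0 i
  push_cast at hup
  rw [abs_le]
  constructor <;> nlinarith

end Function.Periodic

theorem Fin.abs_mul_sum_add_natCast_sub_le {r : ℕ} [NeZero r] (g : Fin r → ℝ) (hg : 0 ≤ g)
    (p : Fin r) (m : ℕ) :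
    |r * ∑ i : Fin m, g (p + (i : ℕ)) - m * ∑ j, g j| ≤ r * ∑ j, g j := by
  have hperiodic : Function.Periodic (fun i : ℕ => g (p + i)) r := fun i => by simp
  have hperiod_sum : ∑ i ∈ range r, g (p + i) = ∑ j, g j := by
    rw [← Fin.sum_univ_eq_sum_range (fun i => g (p + i))]
    simp only [Fin.cast_val_eq_self]
    exact Fintype.sum_equiv (Equiv.addLeft p) _ _ fun _ => rfl
  rw [Fin.sum_univ_eq_sum_range (fun i => g (p + i)), ← hperiod_sum]
  exact hperiodic.abs_mul_sum_range_sub_le (fun i => hg _) m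

theorem SimpleGraph.ncard_neighborSet_bot_boxProd {α β : Type*} [Fintype α] [Fintype β]
    (F : SimpleGraph β) [DecidableRel F.Adj] (a : α) (b : β) :
    (((⊥ : SimpleGraph α) □ F).neighborSet (a, b)).ncard = F.degree b := by
  classical
  rw [Set.ncard_eq_toFinset_card', Set.toFinset_card, card_neighborSet_eq_degree, degree_boxProd,
    bot_degree, zero_add]

theorem SimpleGraph.sub_ne_of_bot_boxProd_adj {ι G : Type*} [AddGroup G] {F : SimpleGraph G}
    (c : ι → G) {u v : ι × G} (h : ((⊥ : SimpleGraph ι) □ F).Adj u v) :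
    u.2 - c u.1 ≠ v.2 - c v.1 := by
  rcases boxProd_adj.mp h with ⟨h, -⟩ | ⟨hF, hfst⟩
  · exact h.elim
  · rw [hfst, Ne, sub_left_inj]
    exact hF.ne

theorem SimpleGraph.sum_degree_le_card_sq {V : Type*} [Fintype V] (G : SimpleGraph V)
    [DecidableRel G.Adj] : ∑ v, G.degree v ≤ Fintype.card V ^ 2 := by
  calc ∑ v, G.degree v ≤ Fintype.card V • Fintype.card V :=
        sum_le_card_nsmul _ _ _ fun v _ => (G.degree_lt_card_verts v).le
    _ = Fintype.card V ^ 2 := by rw [smul_eq_mul, sq]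

theorem Finset.filter_snd_sub_eq_map {ι G : Type*} [Fintype ι] [Fintype G] [AddGroup G]
    [DecidableEq G] (c : ι → G) (p : G) :
    univ.filter (fun v : ι × G => v.2 - c v.1 = p) =
      univ.map ⟨fun i => (i, p + c i),
        Function.LeftInverse.injective (g := Prod.fst) fun _ => rfl⟩ := by
  ext ⟨i, j⟩
  simp only [mem_filter, mem_univ, true_and, mem_map]
  constructor
  · rintro rfl
    exact ⟨i, by simp⟩
  · rintro ⟨a, ha⟩
    obtain ⟨rfl, rfl⟩ := Prod.mk.inj ha
    exact add_sub_cancel_right p (c a)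

/-- With `n = |ι| · m` and classes of equal size `m`, the left side is the uniformity sum
`∑ₚ (nₚ/n)(dₚ - d)²` for class degree sums `S p` and total degree sum `T`. -/
theorem sum_div_mul_sq_sub_div_le {ι : Type*} [Fintype ι] (m : ℕ) (S : ι → ℝ) (T B : ℝ)
    (h : ∀ p, |Fintype.card ι * S p - T| ≤ B) :
    ∑ p, ((m : ℝ) / ((Fintype.card ι * m : ℕ) : ℝ)) *
        (S p / m - T / ((Fintype.card ι * m : ℕ) : ℝ)) ^ 2
      ≤ (B / ((Fintype.card ι * m : ℕ) : ℝ)) ^ 2 := by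
  generalize hcard : Fintype.card ι = k at h
  rcases m.eq_zero_or_pos with rfl | hm
  · simp
  rcases k.eq_zero_or_pos with rfl | hk
  · simp
  have hn : ((k * m : ℕ) : ℝ) = k * m := Nat.cast_mul k m
  rw [hn]
  calc ∑ p, ((m : ℝ) / (k * m)) * (S p / m - T / (k * m)) ^ 2
      = ∑ p, ((m : ℝ) / (k * m)) * ((k * S p - T) ^ 2 / (k * m) ^ 2) := by
        congr! 2 with p
        rw [← div_pow]
        field_simp
    _ ≤ ∑ _p : ι, ((m : ℝ) / (k * m)) * (B ^ 2 / (k * m) ^ 2) := by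
        refine sum_le_sum fun p _ => mul_le_mul_of_nonneg_left ?_ (by positivity)
        exact div_le_div_of_nonneg_right (sq_le_sq' (abs_le.mp (h p)).1 (abs_le.mp (h p)).2)
          (by positivity)
    _ = (B / (k * m)) ^ 2 := by
        rw [sum_const, card_univ, hcard, nsmul_eq_mul]
        field_simp

theorem stmt_16_general (r m : ℕ) (hr : 1 ≤ r) (F : SimpleGraph (Fin r)) :
    ∃ U : Fin m × Fin r → Fin r,
      (∀ u v, (Ffactor m r F).Adj u v → U u ≠ U v) ∧
      ∑ p : Fin r,
          (((Finset.univ.filter fun v => U v = p).card : ℝ) / ((r * m : ℕ) : ℝ)) *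
            ((∑ v ∈ Finset.univ.filter fun v => U v = p,
                  (((Ffactor m r F).neighborSet v).ncard : ℝ)) /
                ((Finset.univ.filter fun v => U v = p).card : ℝ) -
              (∑ v : Fin m × Fin r, (((Ffactor m r F).neighborSet v).ncard : ℝ)) /
                ((r * m : ℕ) : ℝ)) ^ 2
        ≤ ((r : ℝ) ^ 3 / ((r * m : ℕ) : ℝ)) ^ 2 := by
  classical
  have : NeZero r := NeZero.of_pos hr
  let c : Fin m → Fin r := fun i => ((i : ℕ) : Fin r)
  refine ⟨fun v => v.2 - c v.1, fun u v => SimpleGraph.sub_ne_of_bot_boxProd_adj c, ?_⟩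
  have hD : ∑ j, (F.degree j : ℝ) ≤ r ^ 2 := by
    exact_mod_cast (F.sum_degree_le_card_sq).trans_eq (by rw [Fintype.card_fin])
  have hbound (p : Fin r) :
      |r * ∑ i, (F.degree (p + c i) : ℝ) - m * ∑ j, (F.degree j : ℝ)| ≤ r ^ 3 :=
    calc _ ≤ r * ∑ j, (F.degree j : ℝ) :=
          Fin.abs_mul_sum_add_natCast_sub_le (fun j => (F.degree j : ℝ))
            (fun _ => Nat.cast_nonneg _) p m
      _ ≤ r * r ^ 2 := by gcongr
      _ = r ^ 3 := by ring
  have := sum_div_mul_sq_sub_div_le m (fun p : Fin r => ∑ i, (F.degree (p + c i) : ℝ))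
    (m * ∑ j, (F.degree j : ℝ)) (r ^ 3) (by simpa only [Fintype.card_fin] using hbound)
  simpa only [Ffactor, SimpleGraph.ncard_neighborSet_bot_boxProd, Finset.filter_snd_sub_eq_map,
    card_map, sum_map, Function.Embedding.coeFn_mk, Fintype.sum_prod_type, sum_const, card_univ,
    Fintype.card_fin, nsmul_eq_mul] using this

/-- an `F`-factor on `n = r·m` vertices is `(r, r³/n)`-uniform: its vertex set
has a partition into `r` independent sets with `∑ᵢ (nᵢ/n)(dᵢ − d)² ≤ (r³/n)²`. -/
theorem stmt_16 (r m : ℕ) (hr : 1 ≤ r) (hm : 1 ≤ m) (F : SimpleGraph (Fin r)) :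
    ∃ U : Fin m × Fin r → Fin r,
      (∀ u v, (Ffactor m r F).Adj u v → U u ≠ U v) ∧
      ∑ p : Fin r,
          (((Finset.univ.filter fun v => U v = p).card : ℝ) / ((r * m : ℕ) : ℝ)) *
            ((∑ v ∈ Finset.univ.filter fun v => U v = p,
                  (((Ffactor m r F).neighborSet v).ncard : ℝ)) /
                ((Finset.univ.filter fun v => U v = p).card : ℝ) -
              (∑ v : Fin m × Fin r, (((Ffactor m r F).neighborSet v).ncard : ℝ)) /
                ((r * m : ℕ) : ℝ)) ^ 2
        ≤ ((r : ℝ) ^ 3 / ((r * m : ℕ) : ℝ)) ^ 2 :=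
  stmt_16_general r m hr F
end

section
/- There is an absolute constant A > 0 such that every n-vertex graph H with maximum degree Δ ≥ 1 is (3Δ, A·Δ²·n^{−1/2}·√(log 2Δ))-uniform: V(H) can be partitioned into 3Δ independent sets U₁,…,U_{3Δ} with sizes n_i and average degrees d_i satisfying Σ_{i=1}^{3Δ} (n_i/n)(d_i − d)² ≤ (A·Δ²·n^{−1/2}·√(log 2Δ))², where d is the average degree of H. -/
open Finset

namespace Stmt17

open scoped Classical

variable {n k : ℕ}

noncomputable def colS (w : Fin n → ℝ) (c : Fin n → Fin k) (p : Fin k) : ℝ :=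
  ∑ v ∈ univ.filter (fun v => c v = p), w v

noncomputable def colE (w : Fin n → ℝ) (d : ℝ) (c : Fin n → Fin k) (p : Fin k) : ℝ :=
  colS w c p - d * ((univ.filter (fun v => c v = p)).card : ℝ)

noncomputable def Phi (w : Fin n → ℝ) (d : ℝ) (c : Fin n → Fin k) : ℝ :=
  ∑ p, (colE w d c p) ^ 2

lemma filter_update_of_ne (c : Fin n → Fin k) (v : Fin n) (b q : Fin k)
    (hq1 : q ≠ c v) (hq2 : q ≠ b) :
    univ.filter (fun u => Function.update c v b u = q) = univ.filter (fun u => c u = q) := by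
  ext u
  by_cases h : u = v
  · subst h
    simp [Function.update_self, Ne.symm hq2, Ne.symm hq1]
  · simp [Function.update_of_ne h]

lemma filter_update_old (c : Fin n → Fin k) (v : Fin n) (b : Fin k) (hb : b ≠ c v) :
    univ.filter (fun u => Function.update c v b u = c v)
      = (univ.filter (fun u => c u = c v)).erase v := by
  ext u
  by_cases h : u = v
  · subst h
    simp [Function.update_self, hb]
  · simp [Function.update_of_ne h, h]

lemma filter_update_new (c : Fin n → Fin k) (v : Fin n) (b : Fin k) :
    univ.filter (fun u => Function.update c v b u = b)
      = insert v (univ.filter (fun u => u ≠ v ∧ c u = b)) := by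
  ext u
  by_cases h : u = v
  · subst h
    simp [Function.update_self]
  · simp [Function.update_of_ne h, h]

lemma colE_update_old (w : Fin n → ℝ) (d : ℝ) (c : Fin n → Fin k) (v : Fin n) (b : Fin k)
    (hb : b ≠ c v) :
    colE w d (Function.update c v b) (c v) = colE w d c (c v) - (w v - d) := by
  have hv : v ∈ univ.filter (fun u => c u = c v) := by simp
  unfold colE colS
  rw [filter_update_old c v b hb, Finset.sum_erase_eq_sub hv,
    Finset.cast_card_erase_of_mem hv]
  ring

lemma colE_update_new (w : Fin n → ℝ) (d : ℝ) (c : Fin n → Fin k) (v : Fin n) (b : Fin k)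
    (hb : b ≠ c v) :
    colE w d (Function.update c v b) b = colE w d c b + (w v - d) := by
  have hv : v ∉ univ.filter (fun u => u ≠ v ∧ c u = b) := by simp
  have hfilt : univ.filter (fun u => u ≠ v ∧ c u = b) = univ.filter (fun u => c u = b) := by
    ext u
    by_cases h : u = v
    · subst h
      simp [Ne.symm hb]
    · simp [h]
  unfold colE colS
  rw [filter_update_new c v b, Finset.sum_insert hv, Finset.card_insert_of_notMem hv, hfilt]
  push_cast
  ring

lemma phi_update (w : Fin n → ℝ) (d : ℝ) (c : Fin n → Fin k) (v : Fin n) (b : Fin k)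
    (hb : b ≠ c v) :
    Phi w d (Function.update c v b)
      = Phi w d c - colE w d c (c v) ^ 2 - colE w d c b ^ 2
        + (colE w d c (c v) - (w v - d)) ^ 2 + (colE w d c b + (w v - d)) ^ 2 := by
  have hbmem : b ∈ univ.erase (c v) := by simp [hb]
  have key : ∀ E : Fin k → ℝ, ∑ p, E p = E (c v) + (E b + ∑ p ∈ (univ.erase (c v)).erase b, E p) := by
    intro E
    rw [← Finset.add_sum_erase _ E (mem_univ (c v)), ← Finset.add_sum_erase _ E hbmem]
  have hrest : ∀ q ∈ (univ.erase (c v)).erase b,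
      colE w d (Function.update c v b) q = colE w d c q := by
    intro q hq
    rw [Finset.mem_erase, Finset.mem_erase] at hq
    unfold colE colS
    rw [filter_update_of_ne c v b q hq.2.1 hq.1]
  unfold Phi
  rw [key, key (fun p => colE w d c p ^ 2), colE_update_old w d c v b hb,
    colE_update_new w d c v b hb, Finset.sum_congr rfl (fun q hq => by rw [hrest q hq])]
  ring

/-- Greedy proper coloring with more than `Δ` colors. -/
lemma exists_proper (H : SimpleGraph (Fin n)) {Δ : ℕ}
    (hd : ∀ v, (univ.filter (fun u => H.Adj v u)).card ≤ Δ) (hΔk : Δ < k) :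
    ∃ c : Fin n → Fin k, ∀ u v, H.Adj u v → c u ≠ c v := by
  have hk : 0 < k := Nat.lt_of_le_of_lt (Nat.zero_le _) hΔk
  suffices h : ∀ s : Finset (Fin n), ∃ c : Fin n → Fin k,
      ∀ u v, u ∈ s → v ∈ s → H.Adj u v → c u ≠ c v by
    obtain ⟨c, hc⟩ := h univ
    exact ⟨c, fun u v h' => hc u v (mem_univ u) (mem_univ v) h'⟩
  intro s
  induction s using Finset.induction_on with
  | empty => exact ⟨fun _ => ⟨0, hk⟩, by simp⟩
  | @insert x t hx ih =>
    obtain ⟨c, hc⟩ := ih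
    set bad : Finset (Fin k) := (univ.filter (fun u => H.Adj x u)).image c with hbad
    have hbadcard : bad.card < k := by
      calc bad.card ≤ (univ.filter (fun u => H.Adj x u)).card := Finset.card_image_le
        _ ≤ Δ := hd x
        _ < k := hΔk
    obtain ⟨b, hbmem⟩ : ∃ b : Fin k, b ∉ bad := by
      by_contra h
      push_neg at h
      have hsub : (univ : Finset (Fin k)) ⊆ bad := fun b _ => h b
      have := Finset.card_le_card hsub
      simp only [Finset.card_univ, Fintype.card_fin] at this
      omega
    refine ⟨Function.update c x b, ?_⟩
    intro u v hu hv hadj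
    rcases Finset.mem_insert.mp hu with hu | hu <;> rcases Finset.mem_insert.mp hv with hv | hv
    · exact absurd (hu.trans hv.symm) (H.ne_of_adj hadj)
    · have hvx : v ≠ x := fun h => hx (h ▸ hv)
      rw [hu, Function.update_self, Function.update_of_ne hvx]
      intro h
      exact hbmem (Finset.mem_image.mpr
        ⟨v, Finset.mem_filter.mpr ⟨mem_univ v, hu ▸ hadj⟩, h.symm⟩)
    · have hux : u ≠ x := fun h => hx (h ▸ hu)
      rw [hv, Function.update_self, Function.update_of_ne hux]
      intro h
      exact hbmem (Finset.mem_image.mpr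
        ⟨u, Finset.mem_filter.mpr ⟨mem_univ u, (hv ▸ hadj).symm⟩, h⟩)
    · have hux : u ≠ x := fun h => hx (h ▸ hu)
      have hvx : v ≠ x := fun h => hx (h ▸ hv)
      rw [Function.update_of_ne hux, Function.update_of_ne hvx]
      exact hc u v hu hv hadj

lemma ncard_eq_filter_card (H : SimpleGraph (Fin n)) (v : Fin n) :
    (H.neighborSet v).ncard = (univ.filter (fun u => H.Adj v u)).card := by
  rw [show H.neighborSet v = ↑(univ.filter (fun u => H.Adj v u)) by
    ext u; simp [SimpleGraph.mem_neighborSet]]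
  exact Set.ncard_coe_finset _

/-- Key lemma: a `Phi`-minimizing proper colouring has all excesses bounded by `2Δ`. -/
lemma key (n Δ : ℕ) (hΔ : 1 ≤ Δ) (hn : 1 ≤ n) (H : SimpleGraph (Fin n))
    (hdeg : ∀ v, (H.neighborSet v).ncard ≤ Δ) :
    ∃ c : Fin n → Fin (3 * Δ), (∀ u v, H.Adj u v → c u ≠ c v) ∧
      ∀ p, |colE (fun v => ((H.neighborSet v).ncard : ℝ))
        ((∑ v, ((H.neighborSet v).ncard : ℝ)) / (n : ℝ)) c p| ≤ 2 * (Δ : ℝ) := by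
  set w : Fin n → ℝ := fun v => ((H.neighborSet v).ncard : ℝ) with hw
  set d : ℝ := (∑ v, w v) / (n : ℝ) with hd
  have hnR : (0 : ℝ) < (n : ℝ) := by exact_mod_cast hn
  have hw0 : ∀ v, 0 ≤ w v := fun v => by positivity
  have hwΔ : ∀ v, w v ≤ (Δ : ℝ) := fun v => by
    show ((H.neighborSet v).ncard : ℝ) ≤ (Δ : ℝ)
    exact_mod_cast hdeg v
  have hd0 : 0 ≤ d := div_nonneg (Finset.sum_nonneg fun v _ => hw0 v) hnR.le
  have hdΔ : d ≤ (Δ : ℝ) := by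
    rw [hd, div_le_iff₀ hnR]
    calc ∑ v, w v ≤ ∑ _v : Fin n, (Δ : ℝ) := Finset.sum_le_sum fun v _ => hwΔ v
      _ = (n : ℝ) * Δ := by simp [mul_comm]
      _ = (Δ : ℝ) * n := by ring
  have hdeg' : ∀ v, (univ.filter (fun u => H.Adj v u)).card ≤ Δ := fun v => by
    rw [← ncard_eq_filter_card]; exact hdeg v
  have hΔk : Δ < 3 * Δ := by omega
  obtain ⟨c₀, hc₀⟩ := exists_proper H hdeg' hΔk
  set P : Finset (Fin n → Fin (3 * Δ)) :=
    univ.filter (fun c => ∀ u v, H.Adj u v → c u ≠ c v) with hP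
  have hPne : P.Nonempty := ⟨c₀, Finset.mem_filter.mpr ⟨mem_univ _, hc₀⟩⟩
  obtain ⟨c, hcP, hmin⟩ := Finset.exists_min_image P (Phi w d) hPne
  have hcproper : ∀ u v, H.Adj u v → c u ≠ c v := (Finset.mem_filter.mp hcP).2
  refine ⟨c, hcproper, ?_⟩
  set e : Fin (3 * Δ) → ℝ := colE w d c with he
  -- sum of excesses is zero
  have hsum : ∑ p, e p = 0 := by
    have h1 : ∑ p, colS w c p = ∑ v, w v := Finset.sum_fiberwise univ c w
    have h2 : ∑ p, ((univ.filter (fun v => c v = p)).card : ℝ) = (n : ℝ) := by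
      have := Finset.sum_fiberwise univ c (fun _ : Fin n => (1 : ℝ))
      simpa [Finset.sum_const, Finset.card_univ] using this
    have : ∑ p, e p = (∑ v, w v) - d * (n : ℝ) := by
      simp only [he, colE, Finset.sum_sub_distrib, h1, ← Finset.mul_sum, h2]
    rw [this, hd, div_mul_cancel₀ _ (ne_of_gt hnR)]
    ring
  have hne3 : Nonempty (Fin (3 * Δ)) := ⟨⟨0, by omega⟩⟩
  -- local move inequality
  have move : ∀ (v : Fin n) (b : Fin (3 * Δ)), (∀ u, H.Adj v u → c u ≠ b) →
      0 ≤ (e (c v) - (w v - d)) ^ 2 + (e b + (w v - d)) ^ 2 - e (c v) ^ 2 - e b ^ 2 := by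
    intro v b hbok
    by_cases hba : b = c v
    · subst hba
      nlinarith [sq_nonneg (w v - d)]
    · have hprop' : Function.update c v b ∈ P := by
        apply Finset.mem_filter.mpr
        refine ⟨mem_univ _, fun u u' hadj => ?_⟩
        by_cases hu : u = v <;> by_cases hu' : u' = v
        · exact absurd (hu.trans hu'.symm) (H.ne_of_adj hadj)
        · subst hu
          rw [Function.update_self, Function.update_of_ne hu']
          exact fun h => hbok u' hadj h.symm
        · subst hu'
          rw [Function.update_self, Function.update_of_ne hu]
          exact hbok u hadj.symm
        · rw [Function.update_of_ne hu, Function.update_of_ne hu']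
          exact hcproper u u' hadj
      have h1 := hmin _ hprop'
      rw [phi_update w d c v b hba] at h1
      simp only [← he] at h1
      linarith
  -- legal color sets
  have good : ∀ v : Fin n, ∃ G : Finset (Fin (3 * Δ)),
      2 * Δ ≤ G.card ∧ ∀ b ∈ G, ∀ u, H.Adj v u → c u ≠ b := by
    intro v
    refine ⟨univ \ ((univ.filter (fun u => H.Adj v u)).image c), ?_, ?_⟩
    · rw [Finset.card_sdiff_of_subset (Finset.subset_univ _)]
      have h1 : ((univ.filter (fun u => H.Adj v u)).image c).card ≤ Δ :=
        le_trans Finset.card_image_le (hdeg' v)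
      simp only [Finset.card_univ, Fintype.card_fin]
      omega
    · intro b hb u hadj h
      rw [Finset.mem_sdiff] at hb
      exact hb.2 (Finset.mem_image.mpr ⟨u, Finset.mem_filter.mpr ⟨mem_univ u, hadj⟩, h⟩)
  obtain ⟨a, -, hamax⟩ := Finset.exists_max_image univ e Finset.univ_nonempty
  obtain ⟨a', -, hamin⟩ := Finset.exists_min_image univ e Finset.univ_nonempty
  have hamax' : ∀ p, e p ≤ e a := fun p => hamax p (mem_univ p)
  have hamin' : ∀ p, e a' ≤ e p := fun p => hamin p (mem_univ p)
  -- main claim: e a ≤ 2Δ and -2Δ ≤ e a'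
  have main : e a ≤ 2 * (Δ : ℝ) ∧ -(2 * (Δ : ℝ)) ≤ e a' := by
    have hΔR : (1 : ℝ) ≤ (Δ : ℝ) := by exact_mod_cast hΔ
    rcases le_or_gt (e a) 0 with hA | hA
    · -- all excesses are ≤ 0, hence all zero
      have hz : ∀ p, e p = 0 := by
        intro p
        have h1 : ∀ q ∈ (univ : Finset (Fin (3 * Δ))), 0 ≤ -e q :=
          fun q _ => by linarith [hamax' q]
        have h2 : ∑ q, -e q = 0 := by
          rw [Finset.sum_neg_distrib, hsum]; ring
        have := (Finset.sum_eq_zero_iff_of_nonneg h1).mp h2 p (mem_univ p)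
        linarith
      constructor <;> rw [hz] <;> linarith
    rcases le_or_gt 0 (e a') with hB | hB
    · have hz : ∀ p, e p = 0 := by
        intro p
        have h1 : ∀ q ∈ (univ : Finset (Fin (3 * Δ))), 0 ≤ e q :=
          fun q _ => le_trans hB (hamin' q)
        have := (Finset.sum_eq_zero_iff_of_nonneg h1).mp hsum p (mem_univ p)
        linarith
      constructor <;> rw [hz] <;> linarith
    -- main case: e a > 0 > e a'
    -- find a high-degree vertex in part a
    have hva : ∃ v, c v = a ∧ d < w v := by
      by_contra h
      push_neg at h
      have h1 : colS w c a ≤ d * ((univ.filter (fun v => c v = a)).card : ℝ) := by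
        calc colS w c a ≤ ∑ v ∈ univ.filter (fun v => c v = a), d :=
              Finset.sum_le_sum fun v hv => h v (Finset.mem_filter.mp hv).2
          _ = ((univ.filter (fun v => c v = a)).card : ℝ) * d := by
              rw [Finset.sum_const, nsmul_eq_mul]
          _ = d * _ := by ring
      have : e a ≤ 0 := by simp only [he, colE]; linarith
      linarith
    have hva' : ∃ v, c v = a' ∧ w v < d := by
      by_contra h
      push_neg at h
      have h1 : d * ((univ.filter (fun v => c v = a')).card : ℝ) ≤ colS w c a' := by
        calc d * ((univ.filter (fun v => c v = a')).card : ℝ)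
            = ∑ _v ∈ univ.filter (fun v => c v = a'), d := by
              rw [Finset.sum_const, nsmul_eq_mul]; ring
          _ ≤ colS w c a' := Finset.sum_le_sum fun v hv => h v (Finset.mem_filter.mp hv).2
      have : 0 ≤ e a' := by simp only [he, colE]; linarith
      linarith
    obtain ⟨v, hv1, hv2⟩ := hva
    obtain ⟨v', hv1', hv2'⟩ := hva'
    obtain ⟨G, hGcard, hGok⟩ := good v
    obtain ⟨G', hGcard', hGok'⟩ := good v'
    have hi : ∀ b ∈ G, e a - (Δ : ℝ) ≤ e b := by
      intro b hb
      have h0 := move v b (hGok b hb)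
      rw [hv1] at h0
      have hy : 0 < w v - d := by linarith
      have h2 : 0 ≤ e b - e a + (w v - d) := by nlinarith [h0, hy]
      have h3 : w v - d ≤ (Δ : ℝ) := by linarith [hwΔ v]
      linarith
    have lo : ∀ b ∈ G', e b ≤ e a' + (Δ : ℝ) := by
      intro b hb
      have h0 := move v' b (hGok' b hb)
      rw [hv1'] at h0
      have hy : w v' - d < 0 := by linarith
      have h2 : e b - e a' + (w v' - d) ≤ 0 := by nlinarith [h0, hy]
      have h3 : -(Δ : ℝ) ≤ w v' - d := by linarith [hw0 v']
      linarith
    -- pigeonhole: G and G' intersect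
    have hinter : (G ∩ G').Nonempty := by
      rw [← Finset.card_pos]
      have h1 := Finset.card_union_add_card_inter G G'
      have h2 : (G ∪ G').card ≤ 3 * Δ := by
        calc (G ∪ G').card ≤ (univ : Finset (Fin (3 * Δ))).card := Finset.card_le_card (Finset.subset_univ _)
          _ = 3 * Δ := by simp
      omega
    obtain ⟨p, hp⟩ := hinter
    rw [Finset.mem_inter] at hp
    have h1 := hi p hp.1
    have h2 := lo p hp.2
    constructor <;> linarith
  intro p
  rw [abs_le]
  exact ⟨by linarith [hamin' p, main.2], by linarith [hamax' p, main.1]⟩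

end Stmt17

/-- every `n`-vertex graph of maximum degree `Δ ≥ 1` is
`(3Δ, A·Δ²·n^{-1/2}·√(log 2Δ))`-uniform for an absolute constant `A > 0`. -/
theorem stmt_17 :
    ∃ A : ℝ, 0 < A ∧
      ∀ (n Δ : ℕ) (H : SimpleGraph (Fin n)),
        1 ≤ Δ → (∀ v, (H.neighborSet v).ncard ≤ Δ) →
        ∃ U : Fin n → Fin (3 * Δ),
          (∀ u v, H.Adj u v → U u ≠ U v) ∧
          ∑ p : Fin (3 * Δ),
              (((Finset.univ.filter fun v => U v = p).card : ℝ) / (n : ℝ)) *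
                ((∑ v ∈ Finset.univ.filter fun v => U v = p, ((H.neighborSet v).ncard : ℝ)) /
                    ((Finset.univ.filter fun v => U v = p).card : ℝ) -
                  (∑ v : Fin n, ((H.neighborSet v).ncard : ℝ)) / (n : ℝ)) ^ 2
            ≤ (A * (Δ : ℝ) ^ 2 * (Real.sqrt n)⁻¹ * Real.sqrt (Real.log (2 * (Δ : ℝ)))) ^ 2 := by
  refine ⟨5, by norm_num, ?_⟩
  intro n Δ H hΔ hdeg
  rcases Nat.eq_zero_or_pos n with rfl | hn
  · refine ⟨fun v => v.elim0, fun u => u.elim0, ?_⟩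
    refine le_trans (le_of_eq (Finset.sum_eq_zero fun p _ => ?_)) (by positivity)
    simp [Finset.univ_eq_empty]
  · obtain ⟨c, hcprop, hbound⟩ := Stmt17.key n Δ hΔ hn H hdeg
    refine ⟨c, hcprop, ?_⟩
    have hnR : (0 : ℝ) < (n : ℝ) := by exact_mod_cast hn
    have hΔR : (1 : ℝ) ≤ (Δ : ℝ) := by exact_mod_cast hΔ
    have hterm : ∀ p : Fin (3 * Δ),
        (((Finset.univ.filter fun v => c v = p).card : ℝ) / (n : ℝ)) *
          ((∑ v ∈ Finset.univ.filter fun v => c v = p, ((H.neighborSet v).ncard : ℝ)) /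
              ((Finset.univ.filter fun v => c v = p).card : ℝ) -
            (∑ v : Fin n, ((H.neighborSet v).ncard : ℝ)) / (n : ℝ)) ^ 2
          ≤ 4 * (Δ : ℝ) ^ 2 / (n : ℝ) := by
      intro p
      have habs := hbound p
      simp only [Stmt17.colE, Stmt17.colS] at habs
      set cp : ℝ := ((Finset.univ.filter fun v => c v = p).card : ℝ) with hcp
      set Sp : ℝ := ∑ v ∈ Finset.univ.filter fun v => c v = p, ((H.neighborSet v).ncard : ℝ)
        with hSp
      set d : ℝ := (∑ v : Fin n, ((H.neighborSet v).ncard : ℝ)) / (n : ℝ) with hd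
      rcases eq_or_ne (Finset.univ.filter fun v => c v = p).card 0 with h0 | h0
      · rw [hcp, h0]
        simp only [Nat.cast_zero, zero_div, zero_mul]
        positivity
      · have hcp1 : (1 : ℝ) ≤ cp := by
          rw [hcp]; exact_mod_cast Nat.one_le_iff_ne_zero.mpr h0
        have hcp0 : (0 : ℝ) < cp := by linarith
        have hE2 : (Sp - d * cp) ^ 2 ≤ 4 * (Δ : ℝ) ^ 2 := by
          have h1 : (Sp - d * cp) ^ 2 ≤ (2 * (Δ : ℝ)) ^ 2 := by
            rw [← sq_abs]
            exact pow_le_pow_left₀ (abs_nonneg _) habs 2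
          nlinarith [h1]
        have heq : Sp / cp - d = (Sp - d * cp) / cp := by field_simp
        rw [heq, div_pow]
        have hkey : cp / (n : ℝ) * ((Sp - d * cp) ^ 2 / cp ^ 2)
            = (Sp - d * cp) ^ 2 / (cp * (n : ℝ)) := by
          field_simp
        rw [hkey]
        calc (Sp - d * cp) ^ 2 / (cp * (n : ℝ))
            ≤ (4 * (Δ : ℝ) ^ 2) / (cp * (n : ℝ)) := by gcongr
          _ ≤ 4 * (Δ : ℝ) ^ 2 / (n : ℝ) := by
              apply div_le_div_of_nonneg_left (by positivity) hnR
              nlinarith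
    have hL0 : 0 ≤ Real.log (2 * (Δ : ℝ)) := Real.log_nonneg (by linarith)
    have hsqn : ((Real.sqrt n)⁻¹) ^ 2 = ((n : ℝ))⁻¹ := by
      rw [inv_pow, Real.sq_sqrt hnR.le]
    have hsqL : (Real.sqrt (Real.log (2 * (Δ : ℝ)))) ^ 2 = Real.log (2 * (Δ : ℝ)) :=
      Real.sq_sqrt hL0
    have hRHS : ((5 : ℝ) * (Δ : ℝ) ^ 2 * (Real.sqrt n)⁻¹ * Real.sqrt (Real.log (2 * (Δ : ℝ)))) ^ 2
        = 25 * (Δ : ℝ) ^ 4 * Real.log (2 * (Δ : ℝ)) / (n : ℝ) := by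
      rw [mul_pow, mul_pow, mul_pow, hsqn, hsqL]
      ring
    calc ∑ p : Fin (3 * Δ),
            (((Finset.univ.filter fun v => c v = p).card : ℝ) / (n : ℝ)) *
              ((∑ v ∈ Finset.univ.filter fun v => c v = p, ((H.neighborSet v).ncard : ℝ)) /
                  ((Finset.univ.filter fun v => c v = p).card : ℝ) -
                (∑ v : Fin n, ((H.neighborSet v).ncard : ℝ)) / (n : ℝ)) ^ 2
        ≤ (univ : Finset (Fin (3 * Δ))).card • (4 * (Δ : ℝ) ^ 2 / (n : ℝ)) :=
          Finset.sum_le_card_nsmul _ _ _ (fun p _ => hterm p)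
      _ = ((3 * Δ : ℕ) : ℝ) * (4 * (Δ : ℝ) ^ 2 / (n : ℝ)) := by
          rw [Finset.card_univ, Fintype.card_fin, nsmul_eq_mul]
      _ ≤ ((5 : ℝ) * (Δ : ℝ) ^ 2 * (Real.sqrt n)⁻¹ * Real.sqrt (Real.log (2 * (Δ : ℝ)))) ^ 2 := by
          rw [hRHS,
            show ((3 * Δ : ℕ) : ℝ) * (4 * (Δ : ℝ) ^ 2 / (n : ℝ))
              = 12 * (Δ : ℝ) ^ 3 / (n : ℝ) by push_cast; ring]
          rw [div_le_div_iff₀ hnR hnR]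
          have hlog2 : (0.6931471803 : ℝ) < Real.log 2 := Real.log_two_gt_d9
          have hmono : Real.log 2 ≤ Real.log (2 * (Δ : ℝ)) := by
            apply Real.log_le_log (by norm_num)
            nlinarith
          have hΔ4 : (Δ : ℝ) ^ 3 ≤ (Δ : ℝ) ^ 4 :=
            pow_le_pow_right₀ hΔR (by norm_num)
          have h1 : (12 : ℝ) * (Δ : ℝ) ^ 3 ≤ 25 * (Δ : ℝ) ^ 4 * Real.log (2 * (Δ : ℝ)) := by
            nlinarith [mul_le_mul_of_nonneg_left hmono
                (by positivity : (0 : ℝ) ≤ 25 * (Δ : ℝ) ^ 4),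
              pow_nonneg (by linarith : (0 : ℝ) ≤ (Δ : ℝ)) 3,
              pow_nonneg (by linarith : (0 : ℝ) ≤ (Δ : ℝ)) 4, hΔ4, hlog2]
          exact mul_le_mul_of_nonneg_right h1 hnR.le
end
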